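/- arXiv:cs/0610136 — 7 statements merged into one kernel-verified Lean document; each statement's English description precedes it below -/
import Mathlib

section
/- Let n ≥ 4 be an integer and let A be an n×n complex matrix all of whose entries have absolute value at most B, where B > 1 is a real number. Let C_A denote the characteristic polynomial of A and let ‖C_A‖_∞ denote the maximum of the absolute values of its coefficients. Then log₂(‖C_A‖_∞) ≤ (n/2)·(log₂(n) + log₂(B²) + 0.21163175). -/
set_option maxRecDepth 100000
set_option exponentiation.threshold 2000
open Finset Matrix Polynomial

open Finset

lemma amgm_prod {ι : Type*} [Fintype ι] [Nonempty ι] (f : ι → ℝ) (hf : ∀ i, 0 ≤ f i) :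
    ∏ i, f i ≤ ((∑ i, f i) / (Fintype.card ι)) ^ (Fintype.card ι) := by
  set k := Fintype.card ι with hk
  have hk0 : (0:ℝ) < k := by positivity
  have h1 : ∏ i, (f i) ^ ((k:ℝ)⁻¹) ≤ ∑ i, (k:ℝ)⁻¹ * f i := by
    apply Real.geom_mean_le_arith_mean_weighted univ _ _ (fun _ _ => by positivity)
      ?_ (fun i _ => hf i)
    simp only [Finset.sum_const, Finset.card_univ, nsmul_eq_mul, ← hk]
    field_simp
  have h2 : (∏ i, (f i) ^ ((k:ℝ)⁻¹)) ^ k = ∏ i, f i := by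
    rw [← Finset.prod_pow]
    congr 1; funext i
    rw [← Real.rpow_natCast ((f i) ^ ((k:ℝ)⁻¹)) k, ← Real.rpow_mul (hf i)]
    rw [inv_mul_cancel₀ (ne_of_gt hk0), Real.rpow_one]
  calc ∏ i, f i = (∏ i, (f i) ^ ((k:ℝ)⁻¹)) ^ k := h2.symm
    _ ≤ (∑ i, (k:ℝ)⁻¹ * f i) ^ k := by
        exact pow_le_pow_left₀ (Finset.prod_nonneg fun i _ => Real.rpow_nonneg (hf i) _) h1 k
    _ = ((∑ i, f i) / k) ^ k := by rw [← Finset.mul_sum]; ring_nf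

open Matrix ComplexOrder in
lemma abs_det_sq_le {m : Type*} [Fintype m] [DecidableEq m] (M : Matrix m m ℂ) {B : ℝ}
    (hB : 0 ≤ B) (h : ∀ i j, ‖M i j‖ ≤ B) :
    ‖M.det‖ ^ 2 ≤ ((Fintype.card m : ℝ) * B ^ 2) ^ (Fintype.card m) := by
  rcases isEmpty_or_nonempty m with hm | hm
  · simp [Matrix.det_isEmpty, Fintype.card_eq_zero]
  set P := M * Mᴴ with hPdef
  have hP : P.PosSemidef := Matrix.posSemidef_self_mul_conjTranspose M
  have hH : P.IsHermitian := hP.1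
  -- determinant
  have hdetR : Complex.normSq M.det = ∏ i, hH.eigenvalues i := by
    have h0 : (Complex.normSq M.det : ℂ) = ∏ i, (hH.eigenvalues i : ℂ) := by
      rw [show ((Complex.normSq M.det : ℝ) : ℂ) = P.det by
        simp [hPdef, Matrix.det_mul, Matrix.det_conjTranspose, Complex.star_def,
          Complex.mul_conj]]
      exact hH.det_eq_prod_eigenvalues
    rw [← Complex.ofReal_prod] at h0
    exact_mod_cast h0
  -- trace
  have htr : P.trace = ∑ i, (hH.eigenvalues i : ℂ) := by
    conv_lhs => rw [hH.spectral_theorem]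
    rw [Unitary.conjStarAlgAut_apply, Matrix.trace_mul_cycle,
      (Matrix.mem_unitaryGroup_iff').mp (hH.eigenvectorUnitary).2, one_mul,
      Matrix.trace_diagonal]
    simp
  have htr2 : P.trace = ∑ i, ∑ j, (Complex.normSq (M i j) : ℂ) := by
    rw [hPdef, Matrix.trace]
    congr 1; funext i
    simp [Matrix.diag, Matrix.mul_apply, Matrix.conjTranspose_apply, Complex.mul_conj]
  have htrR : ∑ i, hH.eigenvalues i = ∑ i : m, ∑ j : m, Complex.normSq (M i j) := by
    have h0 := htr.symm.trans htr2
    rw [← Complex.ofReal_sum] at h0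
    have h2 : ∑ i : m, ∑ j : m, (Complex.normSq (M i j) : ℂ)
        = ((∑ i : m, ∑ j : m, Complex.normSq (M i j) : ℝ) : ℂ) := by push_cast; rfl
    rw [h2] at h0
    exact_mod_cast h0
  set k := Fintype.card m with hk
  have hμnn : ∀ i, 0 ≤ hH.eigenvalues i := fun i => hP.eigenvalues_nonneg i
  have hsum : ∑ i, hH.eigenvalues i ≤ (k:ℝ) * (k * B ^ 2) := by
    rw [htrR]
    calc ∑ i : m, ∑ j : m, Complex.normSq (M i j) ≤ ∑ _i : m, ∑ _j : m, B ^ 2 := by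
          apply Finset.sum_le_sum; intro i _
          apply Finset.sum_le_sum; intro j _
          rw [← Complex.sq_norm]
          exact pow_le_pow_left₀ (norm_nonneg _) (h i j) 2
      _ = (k:ℝ) * ((k:ℝ) * B ^ 2) := by
          simp [Finset.sum_const, Finset.card_univ, ← hk]
          try ring
  calc ‖M.det‖ ^ 2 = ∏ i, hH.eigenvalues i := by rw [Complex.sq_norm]; exact hdetR
    _ ≤ ((∑ i, hH.eigenvalues i) / k) ^ k := amgm_prod _ hμnn
    _ ≤ ((k:ℝ) * B ^ 2) ^ k := by
        apply pow_le_pow_left₀ (div_nonneg (Finset.sum_nonneg fun i _ => hμnn i) (by positivity))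
        rw [div_le_iff₀ (by positivity)]
        calc ∑ i, hH.eigenvalues i ≤ (k:ℝ) * (k * B^2) := hsum
          _ = (k:ℝ) * B ^2 * k := by ring

noncomputable def NS {n : ℕ} (A : Matrix (Fin n) (Fin n) ℂ) (S : Finset (Fin n)) :
    Matrix (Fin n) (Fin n) ℂ :=
  Matrix.of fun i j => if i ∈ S then (1 : Matrix (Fin n) (Fin n) ℂ) i j else (-A) i j

lemma charpoly_coeff_expand {n : ℕ} (A : Matrix (Fin n) (Fin n) ℂ) (k : ℕ) :
    (Matrix.charpoly A).coeff k
      = ∑ S : Finset (Fin n), if S.card = k then (NS A S).det else 0 := by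
  classical
  set e : Fin n → (Fin n → ℂ[X]) := fun i => Pi.single i (1 : ℂ[X]) with he
  set b : Fin n → (Fin n → ℂ[X]) := fun i j => -C (A i j) with hb
  set f := (Matrix.detRowAlternating : (Fin n → ℂ[X]) [⋀^Fin n]→ₗ[ℂ[X]] ℂ[X]) with hf
  have hrows : Matrix.charpoly A = f.toMultilinearMap (fun i => (fun j => (X : ℂ[X]) • e i j) + b i) := by
    show (Matrix.charmatrix A).det = _
    have : Matrix.charmatrix A = Matrix.of (fun i => (fun j => (X : ℂ[X]) • e i j) + b i) := by
      ext i j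
      by_cases hij : i = j
      · subst hij
        simp [charmatrix_apply_eq, he, hb, Pi.single_apply, smul_eq_mul, sub_eq_add_neg]
      · simp [charmatrix_apply_ne _ _ _ hij, he, hb, Pi.single_apply,
          Ne.symm hij, smul_eq_mul]
    rw [this]
    rfl
  rw [hrows]
  have hadd := f.toMultilinearMap.map_add_univ (fun i => (fun j => (X : ℂ[X]) • e i j)) b
  have hadd' : (f.toMultilinearMap fun i => (fun j => (X : ℂ[X]) • e i j) + b i)
      = ∑ s : Finset (Fin n), f.toMultilinearMap (s.piecewise (fun i => (fun j => (X : ℂ[X]) • e i j)) b) := by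
    rw [← hadd]; rfl
  rw [hadd']
  rw [Polynomial.finset_sum_coeff]
  apply Finset.sum_congr rfl
  intro S _
  have hpiece : (S.piecewise (fun i => (fun j => (X : ℂ[X]) • e i j)) b)
      = fun i => (if i ∈ S then (X:ℂ[X]) else 1) • (S.piecewise e b) i := by
    funext i
    by_cases hi : i ∈ S <;> funext j <;> simp [Finset.piecewise, hi]
  rw [hpiece, f.toMultilinearMap.map_smul_univ]
  have hprod : (∏ i, if i ∈ S then (X:ℂ[X]) else 1) = X ^ S.card := by
    rw [Finset.prod_ite_mem, Finset.univ_inter, Finset.prod_const]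
  rw [hprod]
  have hfg : f.toMultilinearMap (S.piecewise e b) = C ((NS A S).det) := by
    have : (Matrix.of (S.piecewise e b) : Matrix (Fin n) (Fin n) ℂ[X]) = (NS A S).map C := by
      ext i j
      by_cases hi : i ∈ S
      · simp [Finset.piecewise, hi, NS, he, Pi.single_apply, Matrix.one_apply, eq_comm]
      · simp [Finset.piecewise, hi, NS, hb]
    show (Matrix.of (S.piecewise e b)).det = _
    rw [this, ← RingHom.mapMatrix_apply, ← RingHom.map_det]
  rw [hfg, smul_eq_mul, mul_comm, Polynomial.coeff_C_mul_X_pow]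
  simp [eq_comm]

lemma det_NS {n : ℕ} (A : Matrix (Fin n) (Fin n) ℂ) (S : Finset (Fin n)) :
    (NS A S).det
      = Matrix.det ((-A).submatrix (fun i : {x : Fin n // x ∉ S} => (i : Fin n))
          (fun i : {x : Fin n // x ∉ S} => (i : Fin n))) := by
  classical
  have hcompl : ∀ x : Fin n, ¬ x ∈ S ↔ x ∉ S := fun _ => Iff.rfl
  set e : {x : Fin n // x ∈ S} ⊕ {x : Fin n // ¬ x ∈ S} ≃ Fin n :=
    Equiv.sumCompl (fun x => x ∈ S) with he
  rw [← Matrix.det_submatrix_equiv_self e (NS A S)]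
  have hblock : (NS A S).submatrix e e
      = Matrix.fromBlocks 1 0
          ((-A).submatrix (fun i : {x : Fin n // ¬ x ∈ S} => (i : Fin n))
            (fun i : {x : Fin n // x ∈ S} => (i : Fin n)))
          ((-A).submatrix (fun i : {x : Fin n // ¬ x ∈ S} => (i : Fin n))
            (fun i : {x : Fin n // ¬ x ∈ S} => (i : Fin n))) := by
    ext i j
    rcases i with i | i <;> rcases j with j | j
    · simp only [Matrix.submatrix_apply, Matrix.fromBlocks_apply₁₁, NS, Matrix.of_apply, he,
        Equiv.sumCompl_apply_inl, i.2, if_pos, Matrix.one_apply, Subtype.val_inj]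
      try split <;> simp_all
    · simp only [Matrix.submatrix_apply, Matrix.fromBlocks_apply₁₂, NS, Matrix.of_apply, he,
        Equiv.sumCompl_apply_inl, Equiv.sumCompl_apply_inr, i.2, if_pos, Matrix.one_apply,
        Matrix.zero_apply]
      have : (i : Fin n) ≠ (j : Fin n) := fun hij => j.2 (hij ▸ i.2)
      simp [this]
    · simp [NS, he, j.2, i.2]
    · simp [NS, he, i.2]
  rw [hblock, Matrix.det_fromBlocks_zero₁₂, Matrix.det_one, one_mul]

lemma abs_det_NS_le {n : ℕ} (A : Matrix (Fin n) (Fin n) ℂ) (S : Finset (Fin n)) {B : ℝ}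
    (hB : 0 ≤ B) (hA : ∀ i j, ‖A i j‖ ≤ B) :
    ‖(NS A S).det‖ ≤ Real.sqrt ((((n - S.card : ℕ)) * B ^ 2) ^ (n - S.card : ℕ)) := by
  classical
  rw [det_NS]
  rw [Real.le_sqrt (norm_nonneg _)]
  have hcard : Fintype.card {x : Fin n // x ∉ S} = n - S.card := by
    simp [Fintype.card_subtype_compl, Fintype.card_coe]
  have := abs_det_sq_le ((-A).submatrix (fun i : {x : Fin n // x ∉ S} => (i : Fin n))
      (fun i : {x : Fin n // x ∉ S} => (i : Fin n))) hB
      (fun i j => by simpa using hA i j)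
  rw [hcard] at this
  exact this
  positivity


lemma fin_check : ∀ n < 186, 4 ≤ n → ∀ j < n+1,
    (n.choose j)^12 * j^(6*j) * 46656^n ≤ n^(6*n) * 112500^n := by decide

lemma l2pos : (0:ℝ) < Real.log 2 := Real.log_pos (by norm_num)

lemma log5_ub : Real.log 5 ≤ (49471/21306) * Real.log 2 := by
  have h : ((5:ℝ))^(21306:ℕ) ≤ (2:ℝ)^(49471:ℕ) := by
    exact_mod_cast (by decide +kernel : (5:ℕ)^21306 ≤ 2^49471)
  have h2 := Real.log_le_log (by positivity) h
  rw [Real.log_pow, Real.log_pow] at h2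
  push_cast at h2
  linarith
lemma log3_lb : (50508/31867) * Real.log 2 ≤ Real.log 3 := by
  have h : ((2:ℝ))^(50508:ℕ) ≤ (3:ℝ)^(31867:ℕ) := by
    exact_mod_cast (by decide +kernel : (2:ℕ)^50508 ≤ 3^31867)
  have h2 := Real.log_le_log (by positivity) h
  rw [Real.log_pow, Real.log_pow] at h2
  push_cast at h2
  linarith
lemma log5_lb : (232192/100000) * Real.log 2 ≤ Real.log 5 := by
  have h : ((2:ℝ))^(232192:ℕ) ≤ (5:ℝ)^(100000:ℕ) := by
    exact_mod_cast (by decide +kernel : (2:ℕ)^232192 ≤ 5^100000)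
  have h2 := Real.log_le_log (by positivity) h
  rw [Real.log_pow, Real.log_pow] at h2
  push_cast at h2
  linarith
lemma log3_ub : Real.log 3 ≤ (158497/100000) * Real.log 2 := by
  have h : ((3:ℝ))^(100000:ℕ) ≤ (2:ℝ)^(158497:ℕ) := by
    exact_mod_cast (by decide +kernel : (3:ℕ)^100000 ≤ 2^158497)
  have h2 := Real.log_le_log (by positivity) h
  rw [Real.log_pow, Real.log_pow] at h2
  push_cast at h2
  linarith

lemma logR_eq : Real.log ((3125:ℝ)/1296) = 5 * Real.log 5 - 4*Real.log 2 - 4*Real.log 3 := by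
  rw [Real.log_div (by norm_num) (by norm_num),
    show (3125:ℝ) = 5^5 by norm_num, show (1296:ℝ) = 2^4*3^4 by norm_num,
    Real.log_mul (by positivity) (by positivity), Real.log_pow, Real.log_pow, Real.log_pow]
  push_cast; ring

lemma logR_upper : Real.log ((3125:ℝ)/1296) ≤ 1.2697905 * Real.log 2 := by
  rw [logR_eq]
  have h1 := log5_ub
  have h2 := log3_lb
  have h3 := l2pos
  nlinarith

lemma logR_lower : (0.88:ℝ) ≤ Real.log ((3125:ℝ)/1296) := by
  rw [logR_eq]
  have h1 := log5_lb
  have h2 := log3_ub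
  have h3 : (0.6931471803:ℝ) < Real.log 2 := Real.log_two_gt_d9
  nlinarith



lemma aux_pow_fact {s n : ℕ} (hn : 186 ≤ n) :
    (n:ℝ)^s ≤ (s.factorial : ℝ)^2 * ((3125:ℝ)/1296) ^ ((n:ℝ)/6) := by
  set R : ℝ := (3125:ℝ)/1296 with hRdef
  have hRpos : (0:ℝ) < R := by norm_num [hRdef]
  have hR1 : (1:ℝ) < R := by norm_num [hRdef]
  have hnpos : (0:ℝ) < (n:ℝ) := by positivity
  rcases Nat.eq_zero_or_pos s with hs0 | hspos
  · subst hs0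
    simp only [pow_zero, Nat.factorial_zero, Nat.cast_one, one_pow, one_mul]
    calc (1:ℝ) = R ^ (0:ℝ) := (Real.rpow_zero R).symm
      _ ≤ R ^ ((n:ℝ)/6) := by
          apply Real.rpow_le_rpow_of_exponent_le hR1.le
          positivity
  · have hsposR : (0:ℝ) < (s:ℝ) := by exact_mod_cast hspos
    have hfactpos : (0:ℝ) < (s.factorial : ℝ) := by exact_mod_cast s.factorial_pos
    have lhs_pos : (0:ℝ) < (n:ℝ)^s := by positivity
    have rhs_pos : (0:ℝ) < (s.factorial : ℝ)^2 * R ^ ((n:ℝ)/6) := by positivity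
    rw [← Real.exp_log lhs_pos, ← Real.exp_log rhs_pos]
    apply Real.exp_le_exp.2
    rw [Real.log_pow, Real.log_mul (by positivity) (by positivity), Real.log_pow,
      Real.log_rpow hRpos]
    -- goal : s * log n ≤ 2 * log s! + n/6 * log R
    have hfact : (s:ℝ) * Real.log s - s ≤ Real.log (s.factorial : ℝ) := by
      have hterm : ((s:ℝ))^s / (s.factorial : ℝ) ≤ Real.exp s := by
        refine le_trans ?_ (Real.sum_le_exp_of_nonneg hsposR.le (s+1))
        exact Finset.single_le_sum (f := fun i => (s:ℝ)^i / i.factorial)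
          (fun i _ => by positivity) (Finset.self_mem_range_succ s)
      have h2 : ((s:ℝ))^s ≤ (s.factorial : ℝ) * Real.exp s := by
        rw [div_le_iff₀ hfactpos] at hterm; linarith
      have h3 := Real.log_le_log (by positivity) h2
      rw [Real.log_pow, Real.log_mul (by positivity) (Real.exp_pos _).ne',
        Real.log_exp] at h3
      push_cast at h3 ⊢
      linarith
    have hsqrt : Real.sqrt (n:ℝ) * Real.sqrt (n:ℝ) = (n:ℝ) :=
      Real.mul_self_sqrt hnpos.le
    have hsq186 : (13.6364:ℝ) ≤ Real.sqrt n := by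
      rw [show (13.6364:ℝ) = Real.sqrt (13.6364^2) from (Real.sqrt_sq (by norm_num)).symm]
      apply Real.sqrt_le_sqrt
      have : (186:ℝ) ≤ (n:ℝ) := by exact_mod_cast hn
      nlinarith
    have hlogR : (0.88:ℝ) ≤ Real.log R := logR_lower
    have hsqnn := Real.sqrt_nonneg (n:ℝ)
    have c1 : Real.log (Real.sqrt n / s) ≤ Real.sqrt n / s - 1 :=
      Real.log_le_sub_one_of_pos (by positivity)
    have c1' : (s:ℝ) * Real.log (Real.sqrt n / s) ≤ Real.sqrt n - s := by
      have h := mul_le_mul_of_nonneg_left c1 hsposR.le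
      rwa [mul_sub, mul_one, mul_div_cancel₀ _ (ne_of_gt hsposR)] at h
    have c2 : Real.log (n:ℝ) = 2 * Real.log (Real.sqrt n) := by
      rw [Real.log_sqrt hnpos.le]; ring
    have c3 : Real.log (Real.sqrt n / s) = Real.log (Real.sqrt n) - Real.log s :=
      Real.log_div (by positivity) (ne_of_gt hsposR)
    have h12 : (12:ℝ) ≤ Real.sqrt n * Real.log R := by nlinarith
    have h2sqrt : 2 * Real.sqrt n ≤ (n:ℝ)/6 * Real.log R := by nlinarith
    nlinarith [c1', hfact, c2, c3, h2sqrt]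


lemma comb_bound {n j : ℕ} (hn : 4 ≤ n) (hj : j ≤ n) :
    ((n.choose j : ℝ))^2 * (j:ℝ)^j ≤ (n:ℝ)^n * ((3125:ℝ)/1296) ^ ((n:ℝ)/6) := by
  set R : ℝ := (3125:ℝ)/1296 with hRdef
  have hRpos : (0:ℝ) < R := by norm_num [hRdef]
  have hrpow6 : (R ^ ((n:ℝ)/6))^(6:ℕ) = R^(n:ℕ) := by
    rw [← Real.rpow_natCast (R ^ ((n:ℝ)/6)) 6, ← Real.rpow_mul hRpos.le,
      show (n:ℝ)/6*((6:ℕ):ℝ) = ((n:ℕ):ℝ) by push_cast; ring, Real.rpow_natCast]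
  by_cases hsmall : n < 186
  · have hnat := fin_check n hsmall hn j (by omega)
    have hcast : ((n.choose j : ℝ))^12 * (j:ℝ)^(6*j) * 46656^n ≤ (n:ℝ)^(6*n) * 112500^n := by
      exact_mod_cast hnat
    have hy : (0:ℝ) ≤ (n:ℝ)^n * R ^ ((n:ℝ)/6) := by positivity
    apply le_of_pow_le_pow_left₀ (by norm_num : (6:ℕ) ≠ 0) hy
    have e1 : (((n.choose j : ℝ))^2 * (j:ℝ)^j)^(6:ℕ)
        = ((n.choose j : ℝ))^12 * (j:ℝ)^(6*j) := by
      rw [mul_pow, ← pow_mul, ← pow_mul]; norm_num [Nat.mul_comm]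
    have e2 : ((n:ℝ)^n * R ^ ((n:ℝ)/6))^(6:ℕ) = (n:ℝ)^(6*n) * R^(n:ℕ) := by
      rw [mul_pow, hrpow6, ← pow_mul, Nat.mul_comm]
    rw [e1, e2]
    have h46 : (0:ℝ) < (46656:ℝ)^n := by positivity
    rw [← mul_le_mul_iff_of_pos_right h46]
    calc ((n.choose j:ℝ))^12 * (j:ℝ)^(6*j) * 46656^n ≤ (n:ℝ)^(6*n) * 112500^n := hcast
      _ = (n:ℝ)^(6*n) * R^(n:ℕ) * 46656^n := by
          have key : ((3125:ℝ)/1296)^n * 46656^n = 112500^n := by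
            rw [← mul_pow]; congr 1; norm_num
          rw [mul_assoc, hRdef, key]
  · push_neg at hsmall
    set s := n - j with hs
    have hsj : s + j = n := by omega
    have h1 : ((n.choose j):ℝ) ≤ (n:ℝ)^s / (s.factorial : ℝ) := by
      rw [← Nat.choose_symm hj]
      exact Nat.choose_le_pow_div s n
    have h2 : ((j:ℝ))^j ≤ (n:ℝ)^j :=
      pow_le_pow_left₀ (by positivity) (by exact_mod_cast hj) j
    have hfp : (0:ℝ) < (s.factorial : ℝ) := by exact_mod_cast s.factorial_pos
    have hcnn : (0:ℝ) ≤ ((n.choose j):ℝ) := by positivity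
    calc ((n.choose j : ℝ))^2 * (j:ℝ)^j
        ≤ ((n:ℝ)^s / (s.factorial : ℝ))^2 * (n:ℝ)^j := by
          apply mul_le_mul (pow_le_pow_left₀ hcnn h1 2) h2 (by positivity) (by positivity)
      _ = (n:ℝ)^n * ((n:ℝ)^s / ((s.factorial : ℝ))^2) := by
          rw [div_pow, ← pow_mul]
          rw [div_mul_eq_mul_div, mul_comm, ← pow_add]
          rw [show j + s*2 = n + s by omega]
          rw [pow_add]
          ring
      _ ≤ (n:ℝ)^n * R ^ ((n:ℝ)/6) := by
          apply mul_le_mul_of_nonneg_left ?_ (by positivity)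
          rw [div_le_iff₀ (by positivity)]
          rw [mul_comm]
          exact aux_pow_fact hsmall







/-- Lemma 1 (Hadamard-type bound on characteristic polynomial coefficients):
If `A` is an `n × n` complex matrix (`n ≥ 4`) with entries bounded in absolute
value by `B > 1`, then `log₂ ‖C_A‖_∞ ≤ (n/2)(log₂ n + log₂ B² + 0.21163175)`. -/
theorem charpoly_coeff_log_bound (n : ℕ) (hn : 4 ≤ n) (B : ℝ) (hB : 1 < B)
    (A : Matrix (Fin n) (Fin n) ℂ) (hA : ∀ i j, ‖A i j‖ ≤ B) :
    Real.logb 2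
        ((Finset.range (n + 1)).sup' ⟨0, Finset.mem_range.mpr n.succ_pos⟩
          (fun j => ‖(Matrix.charpoly A).coeff j‖))
      ≤ (n / 2 : ℝ) * (Real.logb 2 n + Real.logb 2 (B ^ 2) + 0.21163175) := by
  have hB0 : (0:ℝ) ≤ B := by linarith
  have hB1 : (1:ℝ) ≤ B := hB.le
  have hnpos : (0:ℝ) < (n:ℝ) := by positivity
  set R : ℝ := (3125:ℝ)/1296 with hRdef
  have hRpos : (0:ℝ) < R := by norm_num [hRdef]
  set U : ℝ := (n:ℝ)^n * R ^ ((n:ℝ)/6) * (B^2)^n with hU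
  have hUpos : (0:ℝ) < U := by positivity
  set F : ℕ → ℝ := fun j => ‖(Matrix.charpoly A).coeff j‖ with hF
  have hcoeff : ∀ j ∈ Finset.range (n+1), F j ≤ Real.sqrt U := by
    intro j hjr
    rw [Finset.mem_range] at hjr
    have hjn : j ≤ n := by omega
    have step1 : F j ≤ (n.choose j : ℝ)
        * Real.sqrt ((((n - j : ℕ)) * B ^ 2) ^ (n - j : ℕ)) := by
      show ‖_‖ ≤ _
      rw [charpoly_coeff_expand A j]
      calc ‖∑ S : Finset (Fin n), if S.card = j then (NS A S).det else 0‖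
          ≤ ∑ S : Finset (Fin n), ‖if S.card = j then (NS A S).det else 0‖ :=
            norm_sum_le _ _
        _ ≤ ∑ S : Finset (Fin n),
              (if S.card = j then Real.sqrt ((((n - j:ℕ)) * B^2)^(n-j:ℕ)) else 0) := by
            apply Finset.sum_le_sum; intro S _
            by_cases hSc : S.card = j
            · rw [if_pos hSc, if_pos hSc]
              have h := abs_det_NS_le A S hB0 hA
              rwa [hSc] at h
            · simp [hSc]
        _ = (n.choose j : ℝ) * Real.sqrt ((((n - j:ℕ)) * B^2)^(n-j:ℕ)) := by
            rw [← Finset.sum_filter, Finset.sum_const, nsmul_eq_mul]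
            congr 2
            have : (Finset.univ.filter (fun S : Finset (Fin n) => S.card = j))
                = Finset.powersetCard j (Finset.univ : Finset (Fin n)) := by
              rw [Finset.powersetCard_eq_filter, Finset.powerset_univ]
            rw [this, Finset.card_powersetCard, Finset.card_univ, Fintype.card_fin]
    have step2 : ((n.choose j:ℝ)) * Real.sqrt ((((n-j:ℕ)) * B^2)^(n-j:ℕ)) ≤ Real.sqrt U := by
      rw [show ((n.choose j:ℝ)) = Real.sqrt (((n.choose j:ℝ))^2) from
          (Real.sqrt_sq (by positivity)).symm, ← Real.sqrt_mul (by positivity)]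
      apply Real.sqrt_le_sqrt
      calc ((n.choose j:ℝ))^2 * ((((n-j:ℕ)):ℝ) * B^2)^(n-j:ℕ)
          = (((n.choose j:ℝ))^2 * (((n-j:ℕ)):ℝ)^(n-j:ℕ)) * (B^2)^(n-j:ℕ) := by
            rw [mul_pow]; ring
        _ ≤ ((n:ℝ)^n * R ^ ((n:ℝ)/6)) * (B^2)^n := by
            apply mul_le_mul ?_ ?_ (by positivity) (by positivity)
            · have h := comb_bound hn (Nat.sub_le n j)
              rwa [Nat.choose_symm hjn] at h
            · exact pow_le_pow_right₀ (by nlinarith) (Nat.sub_le n j)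
        _ = U := by rw [hU]
    exact step1.trans step2
  have hsup_le : (Finset.range (n + 1)).sup' ⟨0, Finset.mem_range.mpr n.succ_pos⟩ F
      ≤ Real.sqrt U := Finset.sup'_le _ _ hcoeff
  have hsup_ge1 : (1:ℝ) ≤ (Finset.range (n + 1)).sup' ⟨0, Finset.mem_range.mpr n.succ_pos⟩ F := by
    have hdeg : (Matrix.charpoly A).natDegree = n := by
      rw [Matrix.charpoly_natDegree_eq_dim, Fintype.card_fin]
    have hcn : (Matrix.charpoly A).coeff n = 1 := by
      have hm := Matrix.charpoly_monic A
      rw [Polynomial.Monic, Polynomial.leadingCoeff, hdeg] at hm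
      exact hm
    have h := Finset.le_sup' F (Finset.self_mem_range_succ n)
    simp only [hF, hcn, _root_.map_one, norm_one] at h ⊢
    exact h
  have hsuppos : (0:ℝ) < (Finset.range (n + 1)).sup' ⟨0, Finset.mem_range.mpr n.succ_pos⟩ F :=
    lt_of_lt_of_le zero_lt_one hsup_ge1
  have hlog1 : Real.logb 2 ((Finset.range (n + 1)).sup' ⟨0, Finset.mem_range.mpr n.succ_pos⟩ F)
      ≤ Real.logb 2 (Real.sqrt U) :=
    Real.logb_le_logb_of_le (by norm_num) hsuppos hsup_le
  have hlog2 : Real.logb 2 (Real.sqrt U) = (1/2) * Real.logb 2 U := by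
    rw [Real.logb, Real.logb, Real.log_sqrt hUpos.le]; ring
  have hlogU : Real.logb 2 U
      = (n:ℝ) * Real.logb 2 n + (n:ℝ)/6 * Real.logb 2 R + (n:ℝ) * Real.logb 2 (B^2) := by
    rw [hU, Real.logb_mul (by positivity) (by positivity),
      Real.logb_mul (by positivity) (by positivity), Real.logb_pow, Real.logb_pow]
    have hr : Real.logb 2 (R ^ ((n:ℝ)/6)) = (n:ℝ)/6 * Real.logb 2 R := by
      rw [Real.logb, Real.logb, Real.log_rpow hRpos]; ring
    rw [hr]
  have hlogbR : Real.logb 2 R ≤ 1.2697905 := by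
    rw [Real.logb, div_le_iff₀ (Real.log_pos (by norm_num))]
    exact logR_upper
  have hlogn : (0:ℝ) ≤ Real.logb 2 n := by
    apply Real.logb_nonneg (by norm_num)
    exact_mod_cast Nat.one_le_iff_ne_zero.2 (by omega)
  calc Real.logb 2 ((Finset.range (n + 1)).sup' ⟨0, Finset.mem_range.mpr n.succ_pos⟩ F)
      ≤ (1/2) * Real.logb 2 U := by rw [← hlog2]; exact hlog1
    _ ≤ (n / 2 : ℝ) * (Real.logb 2 n + Real.logb 2 (B ^ 2) + 0.21163175) := by
        rw [hlogU]
        nlinarith [hlogbR, hnpos.le]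
end

section
/- Let A be an n×n complex matrix whose spectral radius is bounded by a real number β ≥ 1, and let the minimal polynomial of A be μ_A(X) = Σ_{i=0}^{d} m_i X^i of degree d. Then for every i: if d ≤ β, then |m_i| ≤ β^d; and if d > β, then |m_i| ≤ min{ (βd)^{d/2}, √(2/(dπ))·2^d·β^d }. -/
open Real

lemma cb_sq (m : ℕ) :
    ((m.centralBinom : ℝ))^2 * ((2*m+1) * Real.Wallis.W m) = 16 ^ m := by
  have h := Real.Wallis.W_eq_factorial_ratio m
  have hc : (m.centralBinom : ℝ) * (m.factorial : ℝ) * (m.factorial : ℝ)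
      = ((2*m).factorial : ℝ) := by
    rw [Nat.centralBinom]
    rw_mod_cast [← Nat.choose_mul_factorial_mul_factorial (Nat.le_mul_of_pos_left m two_pos)]
    congr 2
    omega
  have hf : (0:ℝ) < (m.factorial : ℝ) := by positivity
  have hf2 : (0:ℝ) < ((2*m).factorial : ℝ) := by positivity
  rw [h]
  have h16 : (16:ℝ)^m = 2^(4*m) := by
    rw [pow_mul]; norm_num
  rw [h16]
  field_simp
  rw [← hc]; ring

lemma cb_sq_le (m : ℕ) (hm : 1 ≤ m) :
    ((m.centralBinom : ℝ))^2 * (Real.pi * m) ≤ 16 ^ m := by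
  have key := cb_sq m
  have hW := Real.Wallis.le_W m
  have hm' : (1:ℝ) ≤ (m:ℝ) := by exact_mod_cast hm
  have h2 : (0:ℝ) < 2*(m:ℝ)+2 := by positivity
  rw [div_mul_eq_mul_div, div_le_iff₀ h2] at hW
  have h3 := mul_le_mul_of_nonneg_left hW (by positivity : (0:ℝ) ≤ 2*(m:ℝ)+1)
  have hπ : Real.pi * m ≤ (2*m+1) * Real.Wallis.W m := by
    nlinarith [h3, Real.pi_pos, hm']
  calc ((m.centralBinom : ℝ))^2 * (Real.pi * m)
      ≤ ((m.centralBinom : ℝ))^2 * ((2*m+1) * Real.Wallis.W m) := by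
        apply mul_le_mul_of_nonneg_left hπ (by positivity)
    _ = 16 ^ m := key

lemma cb_le (m : ℕ) (hm : 1 ≤ m) :
    (m.centralBinom : ℝ) ≤ 4 ^ m / Real.sqrt (Real.pi * m) := by
  have hm' : (1:ℝ) ≤ (m:ℝ) := by exact_mod_cast hm
  have hs : (0:ℝ) < Real.sqrt (Real.pi * m) := by
    apply Real.sqrt_pos.2; positivity
  rw [le_div_iff₀ hs]
  have h1 : ((m.centralBinom : ℝ) * Real.sqrt (Real.pi * m))^2 ≤ ((4:ℝ)^m)^2 := by
    rw [mul_pow, Real.sq_sqrt (by positivity)]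
    calc ((m.centralBinom : ℝ))^2 * (Real.pi * m) ≤ 16^m := cb_sq_le m hm
      _ = ((4:ℝ)^m)^2 := by rw [← pow_mul, mul_comm, pow_mul]; norm_num
  have h4 := Real.sqrt_le_sqrt h1
  rwa [Real.sqrt_sq (by positivity), Real.sqrt_sq (by positivity)] at h4

lemma choose_le_sharp (d : ℕ) (hd : 1 ≤ d) (i : ℕ) :
    (d.choose i : ℝ) ≤ Real.sqrt (2 / (d * Real.pi)) * 2 ^ d := by
  have h0 : (d.choose i : ℝ) ≤ (d.choose (d/2) : ℝ) := by
    exact_mod_cast Nat.choose_le_middle i d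
  refine h0.trans ?_
  rcases Nat.even_or_odd d with ⟨m, hm⟩ | ⟨m, hm⟩
  · -- d = 2m
    subst hm
    have hm1 : 1 ≤ m := by omega
    have hm' : (1:ℝ) ≤ (m:ℝ) := by exact_mod_cast hm1
    have hdiv : (m + m) / 2 = m := by omega
    rw [hdiv]
    have hcb : (m + m).choose m = m.centralBinom := by
      rw [Nat.centralBinom, two_mul]
    rw [hcb]
    refine (cb_le m hm1).trans ?_
    have hs : (0:ℝ) < Real.sqrt (Real.pi * m) := Real.sqrt_pos.2 (by positivity)
    rw [div_le_iff₀ hs]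
    have hsq : Real.sqrt (2 / ((↑(m+m)) * Real.pi)) * Real.sqrt (Real.pi * m) = 1 := by
      rw [← Real.sqrt_mul (by positivity)]
      rw [show (2:ℝ) / ((↑(m+m)) * Real.pi) * (Real.pi * m) = 1 by
        push_cast
        field_simp
        ring]
      exact Real.sqrt_one
    refine le_of_eq ?_
    calc (4:ℝ)^m = Real.sqrt (2 / ((↑(m+m)) * Real.pi)) * Real.sqrt (Real.pi * m) * 4^m := by
          rw [hsq, one_mul]
      _ = Real.sqrt (2 / ((↑(m+m)) * Real.pi)) * 2^(m+m) * Real.sqrt (Real.pi * m) := by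
          rw [show (4:ℝ)^m = 2^(m+m) by rw [← two_mul, pow_mul]; norm_num]
          ring
  · -- d = 2m+1
    subst hm
    have hdiv : (2*m + 1) / 2 = m := by omega
    rw [hdiv]
    have hpascal : 2 * ((2*m+1).choose m) = (m+1).centralBinom := by
      have h1 : (2*m+1).choose (m+1) = (2*m+1).choose m := by
        rw [← Nat.choose_symm (by omega : m + 1 ≤ 2*m+1)]
        congr 1
        omega
      have h2 : (2*(m+1)).choose (m+1) = (2*m+1).choose m + (2*m+1).choose (m+1) := by
        rw [show 2*(m+1) = (2*m+1) + 1 by ring]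
        exact Nat.choose_succ_succ' (2*m+1) m
      rw [Nat.centralBinom, h2, h1]
      ring
    have hc : ((2*m+1).choose m : ℝ) = ((m+1).centralBinom : ℝ) / 2 := by
      have := hpascal
      field_simp
      exact_mod_cast (mul_comm 2 ((2*m+1).choose m) ▸ this)
    rw [hc]
    have h1 := cb_le (m+1) (by omega)
    have hcast : ((m+1 : ℕ) : ℝ) = (m:ℝ)+1 := by push_cast; ring
    rw [hcast] at h1
    have hppos : (0:ℝ) < Real.pi * ((m:ℝ)+1) := by positivity
    set t := Real.sqrt (Real.pi * ((m:ℝ)+1)) with ht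
    have hs1 : (0:ℝ) < t := Real.sqrt_pos.2 hppos
    have hmono : Real.sqrt (1/(Real.pi*((m:ℝ)+1))) ≤ Real.sqrt (2/((2*(m:ℝ)+1)*Real.pi)) := by
      apply Real.sqrt_le_sqrt
      rw [div_le_div_iff₀ (by positivity) (by positivity)]
      nlinarith [Real.pi_pos]
    have hinv : Real.sqrt (1/(Real.pi*((m:ℝ)+1))) = 1/t := by
      rw [ht, one_div, one_div, Real.sqrt_inv]
    rw [hinv] at hmono
    calc ((m+1).centralBinom : ℝ)/2 ≤ (4^(m+1)/t)/2 := by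
          apply div_le_div_of_nonneg_right h1
          norm_num
      _ = 2^(2*m+1) * (1/t) := by
          rw [show (4:ℝ)^(m+1) = 2^(2*m+2) by rw [show 2*m+2 = 2*(m+1) by ring, pow_mul]; norm_num]
          field_simp
          ring
      _ ≤ 2^(2*m+1) * Real.sqrt (2/((2*(m:ℝ)+1)*Real.pi)) := by
          apply mul_le_mul_of_nonneg_left hmono (by positivity)
      _ = Real.sqrt (2 / ((↑(2*m+1)) * Real.pi)) * 2 ^ (2*m+1) := by
          push_cast
          ring

/-- Lemma 3 (eigenvalue bound on minimal polynomial coefficients): if the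
spectral radius of `A` is bounded by `β ≥ 1` and `μ_A = Σ m_i X^i` has degree
`d`, then `|m_i| ≤ β^d` when `d ≤ β`, and
`|m_i| ≤ min (√(βd))^d (√(2/(dπ))·2^d·β^d)` when `d > β`. -/
theorem minpoly_coeff_bound (n : ℕ) (A : Matrix (Fin n) (Fin n) ℂ) (β : ℝ) (hβ : 1 ≤ β)
    (hspec : spectralRadius ℂ A ≤ ENNReal.ofReal β)
    (d : ℕ) (hd : d = (minpoly ℂ A).natDegree) (i : ℕ) :
    ((d : ℝ) ≤ β → ‖(minpoly ℂ A).coeff i‖ ≤ β ^ d) ∧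
    (β < (d : ℝ) →
      ‖(minpoly ℂ A).coeff i‖
        ≤ min (Real.sqrt (β * d) ^ d) (Real.sqrt (2 / (d * Real.pi)) * 2 ^ d * β ^ d)) := by
  have hβ0 : (0:ℝ) < β := by linarith
  have hint : IsIntegral ℂ A := Algebra.IsIntegral.isIntegral A
  have hmonic := minpoly.monic hint
  have hsplits : Polynomial.Splits ((minpoly ℂ A).map (RingHom.id ℂ)) :=
    IsAlgClosed.splits _
  have hroots : ∀ z ∈ (Polynomial.map (RingHom.id ℂ) (minpoly ℂ A)).roots, ‖z‖ ≤ β := by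
    intro z hz
    rw [Polynomial.map_id] at hz
    have hroot : (minpoly ℂ A).IsRoot z := Polynomial.isRoot_of_mem_roots hz
    set e := Matrix.toLinAlgEquiv (Pi.basisFun ℂ (Fin n)) with he
    have hmp : minpoly ℂ (e A) = minpoly ℂ A := minpoly.algEquiv_eq e A
    have heig : Module.End.HasEigenvalue (e A) z := by
      apply Module.End.hasEigenvalue_of_isRoot
      rw [hmp]; exact hroot
    have hzspec : z ∈ spectrum ℂ A := by
      rw [← AlgEquiv.spectrum_eq e A]
      exact heig.mem_spectrum
    have h1 : (‖z‖₊ : ENNReal) ≤ spectralRadius ℂ A :=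
      le_iSup₂ (f := fun k (_ : k ∈ spectrum ℂ A) => (‖k‖₊ : ENNReal)) z hzspec
    have h3 := ENNReal.toReal_mono ENNReal.ofReal_ne_top (h1.trans hspec)
    rwa [ENNReal.coe_toReal, coe_nnnorm, ENNReal.toReal_ofReal (by linarith)] at h3
  have hcoeff : ‖(minpoly ℂ A).coeff i‖ ≤ β ^ (d - i) * ((d.choose i : ℕ) : ℝ) := by
    have := Polynomial.coeff_le_of_roots_le i hmonic hsplits hroots
    rw [Polynomial.map_id] at this
    rw [← hd] at this
    simpa using this
  constructor
  · -- case d ≤ β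
    intro hdβ
    rcases le_or_gt i d with hi | hi
    · refine hcoeff.trans ?_
      have h1 : ((d.choose i : ℕ) : ℝ) ≤ (d:ℝ)^i := by
        exact_mod_cast Nat.choose_le_pow d i
      have h2 : ((d.choose i : ℕ) : ℝ) ≤ β^i := h1.trans (by
        apply pow_le_pow_left₀ (by positivity) hdβ)
      calc β ^ (d - i) * ((d.choose i : ℕ) : ℝ) ≤ β ^ (d-i) * β^i := by
            apply mul_le_mul_of_nonneg_left h2 (by positivity)
        _ = β ^ d := by rw [← pow_add, Nat.sub_add_cancel hi]
    · rw [Polynomial.coeff_eq_zero_of_natDegree_lt (hd ▸ hi)]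
      simp only [norm_zero]
      positivity
  · -- case β < d
    intro hβd
    have hd'' : (1:ℝ) < (d:ℝ) := lt_of_le_of_lt hβ hβd
    have hd1 : 1 ≤ d := by exact_mod_cast hd''.le
    have hd' : (1:ℝ) ≤ (d:ℝ) := hd''.le
    have hβd0 : (1:ℝ) ≤ β * d := by nlinarith
    set s := Real.sqrt (β * d) with hs
    have hs1 : 1 ≤ s := Real.one_le_sqrt.2 hβd0
    have hs0 : 0 ≤ s := by linarith
    have hssq : s^2 = β * d := Real.sq_sqrt (by positivity)
    have hβs : β ≤ s := by
      have h0 : Real.sqrt (β^2) ≤ Real.sqrt (β*d) := Real.sqrt_le_sqrt (by nlinarith)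
      rwa [Real.sqrt_sq hβ0.le] at h0
    refine le_min ?_ ?_
    · -- bound by s^d
      rcases le_or_gt i d with hi | hi
      · refine hcoeff.trans ?_
        rcases le_or_gt (2*i) d with h2i | h2i
        · have h1 : ((d.choose i : ℕ) : ℝ) ≤ (d:ℝ)^i := by
            exact_mod_cast Nat.choose_le_pow d i
          calc β ^ (d - i) * ((d.choose i : ℕ) : ℝ)
              ≤ β ^ (d - i) * (d:ℝ)^i := by
                apply mul_le_mul_of_nonneg_left h1 (by positivity)
            _ = β ^ (d - 2*i) * (β*d)^i := by
                rw [mul_pow, ← mul_assoc, ← pow_add]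
                congr 2
                omega
            _ ≤ s ^ (d - 2*i) * (β*d)^i := by
                apply mul_le_mul_of_nonneg_right _ (by positivity)
                apply pow_le_pow_left₀ hβ0.le hβs
            _ = s ^ (d - 2*i) * (s^2)^i := by rw [hssq]
            _ = s ^ d := by
                rw [← pow_mul, ← pow_add]
                congr 1
                omega
        · have h1 : ((d.choose i : ℕ) : ℝ) ≤ (d:ℝ)^(d-i) := by
            rw [← Nat.choose_symm hi]
            exact_mod_cast Nat.choose_le_pow d (d-i)
          calc β ^ (d - i) * ((d.choose i : ℕ) : ℝ)
              ≤ β ^ (d - i) * (d:ℝ)^(d-i) := by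
                apply mul_le_mul_of_nonneg_left h1 (by positivity)
            _ = (s^2) ^ (d-i) := by rw [hssq, mul_pow]
            _ = s ^ (2*(d-i)) := by rw [← pow_mul]
            _ ≤ s ^ d := by
                apply pow_le_pow_right₀ hs1
                omega
      · rw [Polynomial.coeff_eq_zero_of_natDegree_lt (hd ▸ hi)]
        simp only [norm_zero]
        positivity
    · -- bound by sqrt(2/(dπ)) 2^d β^d
      refine hcoeff.trans ?_
      have h1 : β ^ (d - i) ≤ β ^ d := pow_le_pow_right₀ hβ ((d-i).sub_le i |> fun _ => Nat.sub_le d i)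
      have h2 := choose_le_sharp d hd1 i
      calc β ^ (d - i) * ((d.choose i : ℕ) : ℝ)
          ≤ β ^ d * (Real.sqrt (2 / (d * Real.pi)) * 2 ^ d) := by
            apply mul_le_mul h1 h2 (by positivity) (by positivity)
        _ = Real.sqrt (2 / (d * Real.pi)) * 2 ^ d * β ^ d := by ring
end

section
/- Let A be an n×n complex matrix all of whose entries have absolute value at most B, where B ≥ 1 is a real number, and write the characteristic polynomial of A as C_A(X) = Σ_{j=0}^{n} c_j X^j. Then for every j with 0 ≤ j ≤ n, |c_j| ≤ C(n,j)·(√(n−j)·B)^{n−j}, where C(n,j) is the binomial coefficient. -/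
open Matrix Polynomial

set_option maxHeartbeats 1000000 in
/-- Hadamard-type bound: an `m × m` complex matrix with entries of absolute value
at most `B ≥ 0` has `|det M| ≤ (√m · B)^m`. -/
private lemma abs_det_le_hadamard {m : ℕ} {B : ℝ} (hB : 0 ≤ B)
    (M : Matrix (Fin m) (Fin m) ℂ) (hM : ∀ i j, ‖M i j‖ ≤ B) :
    ‖M.det‖ ≤ (Real.sqrt m * B) ^ m := by
  classical
  set f : Fin m → EuclideanSpace ℂ (Fin m) := fun i => WithLp.toLp 2 (M i) with hf
  have hcard : Module.finrank ℂ (EuclideanSpace ℂ (Fin m)) = Fintype.card (Fin m) := by simp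
  letI lo : LinearOrder (Fin m) := inferInstance
  letI lf : LocallyFiniteOrderBot (Fin m) := inferInstance
  letI wf : WellFoundedLT (Fin m) := inferInstance
  have hprod := @InnerProductSpace.gramSchmidtOrthonormalBasis_det ℂ (EuclideanSpace ℂ (Fin m)) _ _ _
    (Fin m) lo lf wf _ _ hcard f _
  set b : OrthonormalBasis (Fin m) ℂ (EuclideanSpace ℂ (Fin m)) :=
    @InnerProductSpace.gramSchmidtOrthonormalBasis ℂ (EuclideanSpace ℂ (Fin m)) _ _ _ (Fin m) lo lf wf _ _ hcard f
    with hb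
  set e := EuclideanSpace.basisFun (Fin m) ℂ with he
  have hmat : e.toBasis.toMatrix f = M.transpose := by
    ext i k
    rw [Module.Basis.toMatrix_apply, OrthonormalBasis.coe_toBasis_repr_apply, he,
      EuclideanSpace.basisFun_repr]
    rfl
  have h1 : e.toBasis.det f = M.det := by
    rw [Module.Basis.det_apply, hmat, Matrix.det_transpose]
  have h2 : e.toBasis.det f = e.toBasis.det b.toBasis * b.toBasis.det f := by
    conv_lhs => rw [AlternatingMap.eq_smul_basis_det b.toBasis e.toBasis.det]
    simp [smul_eq_mul]
  have h3 : ‖e.toBasis.det b.toBasis‖ = 1 := e.det_to_matrix_orthonormalBasis b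
  have h4 : ‖M.det‖ = ‖b.toBasis.det f‖ := by
    rw [← h1, h2, norm_mul, h3, one_mul]
  rw [h4, hprod]
  calc ‖∏ i, (inner ℂ (b i) (f i) : ℂ)‖
      ≤ ∏ i, ‖(inner ℂ (b i) (f i) : ℂ)‖ := le_of_eq (norm_prod _ _)
    _ ≤ ∏ _i : Fin m, (Real.sqrt m * B) := by
        apply Finset.prod_le_prod (fun i _ => norm_nonneg _)
        intro i _
        have hbi : ‖b i‖ = 1 := b.orthonormal.1 i
        calc ‖(inner ℂ (b i) (f i) : ℂ)‖ ≤ ‖b i‖ * ‖f i‖ := norm_inner_le_norm _ _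
          _ = ‖f i‖ := by rw [hbi, one_mul]
          _ ≤ Real.sqrt m * B := by
              rw [EuclideanSpace.norm_eq]
              have hsum : (∑ j, ‖f i j‖ ^ 2) ≤ (m : ℝ) * B ^ 2 := by
                calc (∑ j, ‖f i j‖ ^ 2) ≤ ∑ _j : Fin m, B ^ 2 := by
                      apply Finset.sum_le_sum
                      intro k _
                      have : ‖f i k‖ ≤ B := by
                        exact hM i k
                      exact pow_le_pow_left₀ (norm_nonneg _) this 2
                  _ = (m : ℝ) * B ^ 2 := by
                      rw [Finset.sum_const, Finset.card_univ, Fintype.card_fin, nsmul_eq_mul]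
              calc Real.sqrt (∑ j, ‖f i j‖ ^ 2) ≤ Real.sqrt ((m : ℝ) * B ^ 2) :=
                    Real.sqrt_le_sqrt hsum
                _ = Real.sqrt m * B := by
                    rw [Real.sqrt_mul (Nat.cast_nonneg m), Real.sqrt_sq hB]
    _ = (Real.sqrt m * B) ^ m := by
        rw [Finset.prod_const, Finset.card_univ, Fintype.card_fin]

/-- Minor expansion of the characteristic polynomial coefficients. -/
private lemma charpoly_coeff_expand_s3 {n : ℕ} (A : Matrix (Fin n) (Fin n) ℂ) (j : ℕ) :
    A.charpoly.coeff j =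
      ∑ s ∈ Finset.powersetCard j (Finset.univ : Finset (Fin n)),
        (-1 : ℂ) ^ (n - j) *
          (A.submatrix (Subtype.val : {x // x ∉ s} → Fin n) Subtype.val).det := by
  classical
  set r : Fin n → (Fin n → ℂ[X]) := fun i => Pi.single i X with hr
  set c : Fin n → (Fin n → ℂ[X]) := fun i => fun k => -C (A i k) with hc
  have hchar : A.charmatrix = Matrix.of (r + c) := by
    ext i k
    by_cases h : i = k
    · subst h
      simp [hr, hc, Matrix.charmatrix_apply_eq, Pi.single_apply, sub_eq_add_neg]
    · simp [hr, hc, Matrix.charmatrix_apply_ne _ _ _ h, Pi.single_apply, Ne.symm h]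
  have hdet : A.charpoly = ∑ s : Finset (Fin n), (Matrix.of (s.piecewise r c)).det := by
    show (A.charmatrix).det = _
    rw [hchar]
    exact (Matrix.detRowAlternating (R := ℂ[X]) (n := Fin n)).toMultilinearMap.map_add_univ r c
  have key : ∀ s : Finset (Fin n),
      (Matrix.of (s.piecewise r c)).det =
        C ((-1 : ℂ) ^ (n - s.card) *
            (A.submatrix (Subtype.val : {x // x ∉ s} → Fin n) Subtype.val).det) * X ^ s.card := by
    intro s
    have h1 : Matrix.of (s.piecewise r c) =
        Matrix.of (fun i k => (if i ∈ s then (X : ℂ[X]) else -1) *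
          (if i ∈ s then (1 : Matrix (Fin n) (Fin n) ℂ[X]) i k else C (A i k))) := by
      ext i k
      by_cases h : i ∈ s
      · simp [Finset.piecewise, h, hr, Matrix.one_apply, Pi.single_apply, mul_ite, eq_comm]
      · simp [Finset.piecewise, h, hc]
    erw [h1, Matrix.det_mul_column]
    have h2 : (∏ i, (if i ∈ s then (X : ℂ[X]) else -1)) = X ^ s.card * (-1) ^ (n - s.card) := by
      rw [Finset.prod_ite, Finset.prod_const, Finset.prod_const]
      have e1 : Finset.filter (fun x => x ∈ s) Finset.univ = s := by
        ext x; simp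
      have e2 : (Finset.filter (fun x => ¬ x ∈ s) Finset.univ).card = n - s.card := by
        have : Finset.filter (fun x => ¬ x ∈ s) Finset.univ = sᶜ := by
          ext x; simp
        rw [this, Finset.card_compl, Fintype.card_fin]
      rw [e1, e2]
    have h3 : (Matrix.det (R := ℂ[X]) fun i k => if i ∈ s then (1 : Matrix (Fin n) (Fin n) ℂ[X]) i k
          else C (A i k)) =
        C ((A.submatrix (Subtype.val : {x // x ∉ s} → Fin n) Subtype.val).det) := by
      set N : Matrix (Fin n) (Fin n) ℂ[X] :=
        Matrix.of (fun i k => if i ∈ s then (1 : Matrix (Fin n) (Fin n) ℂ[X]) i k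
          else C (A i k)) with hN
      show N.det = _
      rw [← Matrix.det_submatrix_equiv_self (Equiv.sumCompl (fun x => x ∈ s)) N]
      have hblock : N.submatrix (Equiv.sumCompl (fun x => x ∈ s))
            (Equiv.sumCompl (fun x => x ∈ s)) =
          Matrix.fromBlocks 1 0
            (Matrix.of fun (p : {x // ¬ x ∈ s}) (q : {x // x ∈ s}) => C (A p.1 q.1))
            (Matrix.of fun (p : {x // ¬ x ∈ s}) (q : {x // ¬ x ∈ s}) => C (A p.1 q.1)) := by
        ext i k
        cases i with
        | inl p =>
          cases k with
          | inl q =>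
            simp only [Matrix.submatrix_apply, Equiv.sumCompl_apply_inl, hN, Matrix.of_apply,
              p.2, if_true, Matrix.fromBlocks_apply₁₁, Matrix.one_apply, Subtype.val_inj]
          | inr q =>
            have hne : (p : Fin n) ≠ (q : Fin n) := by
              intro hpq
              exact q.2 (hpq ▸ p.2)
            simp only [Matrix.submatrix_apply, Equiv.sumCompl_apply_inl,
              Equiv.sumCompl_apply_inr, hN, Matrix.of_apply, p.2, if_true,
              Matrix.fromBlocks_apply₁₂, Matrix.one_apply_ne hne, Matrix.zero_apply]
        | inr p =>
          cases k with
          | inl q =>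
            simp only [Matrix.submatrix_apply, Equiv.sumCompl_apply_inl,
              Equiv.sumCompl_apply_inr, hN, Matrix.of_apply, p.2, if_false,
              Matrix.fromBlocks_apply₂₁]
          | inr q =>
            simp only [Matrix.submatrix_apply, Equiv.sumCompl_apply_inr, hN, Matrix.of_apply,
              p.2, if_false, Matrix.fromBlocks_apply₂₂]
      rw [hblock, Matrix.det_fromBlocks_zero₁₂, Matrix.det_one, one_mul, RingHom.map_det]
      rfl
    rw [h3, h2, _root_.map_mul, _root_.map_pow, map_neg, _root_.map_one]
    ring
  rw [hdet, Polynomial.finset_sum_coeff]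
  have hcoe : ∀ s : Finset (Fin n),
      ((Matrix.of (s.piecewise r c)).det).coeff j =
        if j = s.card then
          (-1 : ℂ) ^ (n - s.card) *
            (A.submatrix (Subtype.val : {x // x ∉ s} → Fin n) Subtype.val).det
        else 0 := by
    intro s
    rw [key s, Polynomial.coeff_C_mul_X_pow]
  calc (∑ s : Finset (Fin n), ((Matrix.of (s.piecewise r c)).det).coeff j)
      = ∑ s : Finset (Fin n),
          if j = s.card then
            (-1 : ℂ) ^ (n - s.card) *
              (A.submatrix (Subtype.val : {x // x ∉ s} → Fin n) Subtype.val).det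
          else 0 := Finset.sum_congr rfl (fun s _ => hcoe s)
    _ = ∑ s ∈ Finset.filter (fun s : Finset (Fin n) => j = s.card) Finset.univ,
          (-1 : ℂ) ^ (n - s.card) *
            (A.submatrix (Subtype.val : {x // x ∉ s} → Fin n) Subtype.val).det :=
        (Finset.sum_filter _ _).symm
    _ = ∑ s ∈ Finset.powersetCard j (Finset.univ : Finset (Fin n)),
          (-1 : ℂ) ^ (n - j) *
            (A.submatrix (Subtype.val : {x // x ∉ s} → Fin n) Subtype.val).det := by
        apply Finset.sum_congr
        · ext s
          simp [Finset.mem_powersetCard_univ, eq_comm]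
        · intro s hs
          rw [Finset.mem_powersetCard_univ] at hs
          rw [hs]

/-- Minor-based bound: each coefficient `c_j` of the characteristic polynomial
of an `n × n` complex matrix with entries bounded by `B ≥ 1` satisfies
`|c_j| ≤ C(n,j)·(√(n−j)·B)^{n−j}`. -/
theorem charpoly_coeff_le_minor_bound (n : ℕ) (B : ℝ) (hB : 1 ≤ B)
    (A : Matrix (Fin n) (Fin n) ℂ) (hA : ∀ i j, ‖A i j‖ ≤ B)
    (j : ℕ) (hj : j ≤ n) :
    ‖(Matrix.charpoly A).coeff j‖
      ≤ (n.choose j : ℝ) * (Real.sqrt ((n : ℝ) - j) * B) ^ (n - j) := by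
  classical
  have hB0 : (0 : ℝ) ≤ B := le_trans zero_le_one hB
  rw [charpoly_coeff_expand_s3 A j]
  have hbound : ∀ s ∈ Finset.powersetCard j (Finset.univ : Finset (Fin n)),
      ‖(-1 : ℂ) ^ (n - j) *
          (A.submatrix (Subtype.val : {x // x ∉ s} → Fin n) Subtype.val).det‖
        ≤ (Real.sqrt ((n : ℝ) - j) * B) ^ (n - j) := by
    intro s hs
    rw [Finset.mem_powersetCard_univ] at hs
    rw [norm_mul, norm_pow, norm_neg, norm_one, one_pow, one_mul]
    have hcard : Fintype.card {x // ¬ x ∈ s} = n - j := by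
      rw [Fintype.card_subtype_compl, Fintype.card_fin]
      congr 1
      rw [Fintype.card_coe, hs]
    set E := Fintype.equivFinOfCardEq hcard with hE
    have hdet : (A.submatrix (Subtype.val : {x // x ∉ s} → Fin n) Subtype.val).det
        = ((A.submatrix (Subtype.val : {x // x ∉ s} → Fin n) Subtype.val).submatrix
            E.symm E.symm).det :=
      (Matrix.det_submatrix_equiv_self E.symm _).symm
    rw [hdet]
    have hcast : Real.sqrt ((n : ℝ) - j) = Real.sqrt ((n - j : ℕ)) := by
      rw [Nat.cast_sub hj]
    rw [hcast]
    exact abs_det_le_hadamard hB0 _ (fun p q => hA _ _)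
  calc ‖∑ s ∈ Finset.powersetCard j (Finset.univ : Finset (Fin n)),
        (-1 : ℂ) ^ (n - j) *
          (A.submatrix (Subtype.val : {x // x ∉ s} → Fin n) Subtype.val).det‖
      ≤ ∑ s ∈ Finset.powersetCard j (Finset.univ : Finset (Fin n)),
          ‖(-1 : ℂ) ^ (n - j) *
            (A.submatrix (Subtype.val : {x // x ∉ s} → Fin n) Subtype.val).det‖ :=
        norm_sum_le _ _
    _ ≤ (Finset.powersetCard j (Finset.univ : Finset (Fin n))).card •
          ((Real.sqrt ((n : ℝ) - j) * B) ^ (n - j)) :=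
        Finset.sum_le_card_nsmul _ _ _ hbound
    _ = (n.choose j : ℝ) * (Real.sqrt ((n : ℝ) - j) * B) ^ (n - j) := by
        rw [Finset.card_powersetCard, Finset.card_univ, Fintype.card_fin, nsmul_eq_mul]
end

section
/- For every integer n ≥ 4, the quantity f(n) = (2/n)·log₂(n) + ((n−1)/n)·log₂(n−1) − log₂(n) satisfies f(n) ≤ (5/6)·log₂(5) − (2/3)·log₂(6), with equality when n = 6. -/
open Real

/-- Turn an integer comparison `a ≤ b` into `log a ≤ log b`. -/
private lemma log_le_of_le {a b : ℝ} (ha : 0 < a) (h : a ≤ b) :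
    Real.log a ≤ Real.log b := Real.log_le_log ha h

private lemma h3bound : 17 * Real.log 3 ≤ 27 * Real.log 2 := by
  have h := Real.log_le_log (by positivity) (show (3:ℝ)^17 ≤ 2^27 by norm_num)
  rw [Real.log_pow, Real.log_pow] at h
  push_cast at h
  linarith

private lemma h5bound : 65 * Real.log 2 ≤ 28 * Real.log 5 := by
  have h := Real.log_le_log (by positivity) (show (2:ℝ)^65 ≤ 5^28 by norm_num)
  rw [Real.log_pow, Real.log_pow] at h
  push_cast at h
  linarith

private lemma hlog6 : Real.log 6 = Real.log 2 + Real.log 3 := by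
  rw [show (6:ℝ) = 2 * 3 by norm_num, Real.log_mul (by norm_num) (by norm_num)]

private lemma hlog10 : Real.log 10 = Real.log 2 + Real.log 5 := by
  rw [show (10:ℝ) = 2 * 5 by norm_num, Real.log_mul (by norm_num) (by norm_num)]

/-- The key inequality with natural logs. -/
private lemma key (n : ℕ) (hn : 4 ≤ n) :
    2 * Real.log n + ((n : ℝ) - 1) * Real.log ((n : ℝ) - 1) - n * Real.log n
      ≤ n * (5/6 * Real.log 5 - 2/3 * Real.log 6) := by
  rcases Nat.lt_or_ge n 10 with h10 | h10
  · interval_cases n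
    · -- n = 4 : 9 log 3 + 8 log 6 ≤ 10 log 5 + 6 log 4
      have h := Real.log_le_log (by positivity)
        (show (3:ℝ)^9 * 6^8 ≤ 5^10 * 4^6 by norm_num)
      rw [Real.log_mul (by positivity) (by positivity),
        Real.log_mul (by positivity) (by positivity),
        Real.log_pow, Real.log_pow, Real.log_pow, Real.log_pow] at h
      push_cast at h ⊢
      norm_num
      linarith
    · -- n = 5 : 24 log 4 + 20 log 6 ≤ 43 log 5
      have h := Real.log_le_log (by positivity)
        (show (4:ℝ)^24 * 6^20 ≤ 5^43 by norm_num)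
      rw [Real.log_mul (by positivity) (by positivity),
        Real.log_pow, Real.log_pow, Real.log_pow] at h
      push_cast at h ⊢
      norm_num
      linarith
    · -- n = 6 : equality
      push_cast
      norm_num
      linarith
    · -- n = 7 : 64 log 6 ≤ 35 log 5 + 30 log 7
      have h := Real.log_le_log (by positivity)
        (show (6:ℝ)^64 ≤ 5^35 * 7^30 by norm_num)
      rw [Real.log_mul (by positivity) (by positivity),
        Real.log_pow, Real.log_pow, Real.log_pow] at h
      push_cast at h ⊢
      norm_num
      linarith
    · -- n = 8 : 21 log 7 + 16 log 6 ≤ 20 log 5 + 18 log 8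
      have h := Real.log_le_log (by positivity)
        (show (7:ℝ)^21 * 6^16 ≤ 5^20 * 8^18 by norm_num)
      rw [Real.log_mul (by positivity) (by positivity),
        Real.log_mul (by positivity) (by positivity),
        Real.log_pow, Real.log_pow, Real.log_pow, Real.log_pow] at h
      push_cast at h ⊢
      norm_num
      linarith
    · -- n = 9 : 16 log 8 + 12 log 6 ≤ 15 log 5 + 14 log 9
      have h := Real.log_le_log (by positivity)
        (show (8:ℝ)^16 * 6^12 ≤ 5^15 * 9^14 by norm_num)
      rw [Real.log_mul (by positivity) (by positivity),
        Real.log_mul (by positivity) (by positivity),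
        Real.log_pow, Real.log_pow, Real.log_pow, Real.log_pow] at h
      push_cast at h ⊢
      norm_num
      linarith
  · -- n ≥ 10
    have hx : (10:ℝ) ≤ (n:ℝ) := by exact_mod_cast h10
    revert hx
    generalize (n:ℝ) = x
    intro hx
    have hx0 : (0:ℝ) < x := by linarith
    have hx1 : (0:ℝ) < x - 1 := by linarith
    have h3 := h3bound
    have h5 := h5bound
    have hc : 1/10 ≤ 5/6 * Real.log 5 - 2/3 * Real.log 6 := by
      have h2 := Real.log_two_gt_d9
      rw [hlog6]
      linarith
    have hfinal : Real.log 2 + Real.log 5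
        ≤ 10 * (5/6 * Real.log 5 - 2/3 * Real.log 6) + 9/10 := by
      have h2 := Real.log_two_lt_d9
      rw [hlog6]
      linarith
    -- log (x-1) ≤ log x - 1/x
    have ha : Real.log (x - 1) ≤ Real.log x - 1/x := by
      have h := Real.log_le_sub_one_of_pos (show 0 < (x-1)/x by positivity)
      rw [Real.log_div (by linarith) (by linarith)] at h
      have hr : (x - 1)/x - 1 = -(1/x) := by field_simp; ring
      rw [hr] at h
      linarith
    have e1 : (x - 1) * Real.log (x - 1) ≤ (x - 1) * (Real.log x - 1/x) :=
      mul_le_mul_of_nonneg_left ha (by linarith)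
    have e2 : 2 * Real.log x + (x - 1) * (Real.log x - 1/x) - x * Real.log x
        = Real.log x - 1 + 1/x := by
      field_simp
      ring
    have e3 : Real.log x ≤ Real.log 10 + x/10 - 1 := by
      have h := Real.log_le_sub_one_of_pos (show 0 < x/10 by positivity)
      rw [Real.log_div (by linarith) (by norm_num)] at h
      linarith
    rw [hlog10] at e3
    have e4 : 1/x ≤ 1/10 := by
      apply one_div_le_one_div_of_le <;> linarith
    have e5 : 10 * (5/6 * Real.log 5 - 2/3 * Real.log 6 - 1/10)
        ≤ x * (5/6 * Real.log 5 - 2/3 * Real.log 6 - 1/10) :=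
      mul_le_mul_of_nonneg_right hx (by linarith)
    nlinarith [e1, e2, e3, e4, e5, hfinal]

/-- For every integer `n ≥ 4`,
`f(n) = (2/n)·log₂ n + ((n−1)/n)·log₂(n−1) − log₂ n ≤ (5/6)·log₂ 5 − (2/3)·log₂ 6`,
with equality when `n = 6`. -/
theorem f_le_max_at_six :
    (∀ n : ℕ, 4 ≤ n →
      2 / (n : ℝ) * Real.logb 2 n + ((n : ℝ) - 1) / n * Real.logb 2 ((n : ℝ) - 1)
          - Real.logb 2 n
        ≤ 5 / 6 * Real.logb 2 5 - 2 / 3 * Real.logb 2 6) ∧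
    2 / (6 : ℝ) * Real.logb 2 6 + ((6 : ℝ) - 1) / 6 * Real.logb 2 ((6 : ℝ) - 1)
          - Real.logb 2 6
        = 5 / 6 * Real.logb 2 5 - 2 / 3 * Real.logb 2 6 := by
  constructor
  · intro n hn
    have hl2 : 0 < Real.log 2 := Real.log_pos (by norm_num)
    have hl2' : Real.log 2 ≠ 0 := ne_of_gt hl2
    have hn0 : (0:ℝ) < (n : ℝ) := by
      have : (4:ℝ) ≤ (n : ℝ) := by exact_mod_cast hn
      linarith
    have hn0' : (n:ℝ) ≠ 0 := ne_of_gt hn0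
    have hk := key n hn
    have hpos : 0 < (n : ℝ) * Real.log 2 := by positivity
    calc 2 / (n : ℝ) * Real.logb 2 n + ((n : ℝ) - 1) / n * Real.logb 2 ((n : ℝ) - 1)
          - Real.logb 2 n
        = (2 * Real.log n + ((n : ℝ) - 1) * Real.log ((n : ℝ) - 1) - n * Real.log n)
            / ((n : ℝ) * Real.log 2) := by
          simp only [Real.logb]
          field_simp
      _ ≤ ((n : ℝ) * (5/6 * Real.log 5 - 2/3 * Real.log 6)) / ((n : ℝ) * Real.log 2) := by
          exact (div_le_div_iff_of_pos_right hpos).mpr hk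
      _ = 5 / 6 * Real.logb 2 5 - 2 / 3 * Real.logb 2 6 := by
          simp only [Real.logb]
          field_simp
  · simp only [Real.logb]
    norm_num
    ring
end

section
/- Let n ≥ 4 be a real number and define T(n,j) = log₂(n/(n−j)) + (j/n)·log₂((n−j)/j²) for real j with 0 < j < n. Then T(n,j) is maximized at j₀ = (−1 + √(1 + 4en))/(2e), i.e., T(n,j) ≤ T(n,j₀) for all j ∈ (0,n), where e is Euler's number. -/
lemma T_expand (n x : ℝ) (hn : 0 < n) (hx : 0 < x) (hxn : x < n) :
    Real.logb 2 (n / (n - x)) + x / n * Real.logb 2 ((n - x) / x ^ 2)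
      = (n * Real.log n - (n - x) * Real.log (n - x) - 2 * x * Real.log x)
        / (n * Real.log 2) := by
  have h1 : (0:ℝ) < n - x := by linarith
  have hl2 : Real.log 2 ≠ 0 := by
    have := Real.log_pos (by norm_num : (1:ℝ) < 2); linarith
  rw [Real.logb, Real.logb, Real.log_div (by positivity) (by positivity),
    Real.log_div (by positivity) (by positivity), Real.log_pow]
  field_simp
  ring

/-- For real `n ≥ 4`, the function
`T(n,j) = log₂(n/(n−j)) + (j/n)·log₂((n−j)/j²)` on `0 < j < n` is maximized at
`j₀ = (−1 + √(1 + 4en))/(2e)`. -/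
theorem T_maximized (n : ℝ) (hn : 4 ≤ n) (j : ℝ) (hj0 : 0 < j) (hjn : j < n) :
    Real.logb 2 (n / (n - j)) + j / n * Real.logb 2 ((n - j) / j ^ 2)
      ≤ Real.logb 2 (n / (n - (-1 + Real.sqrt (1 + 4 * Real.exp 1 * n)) / (2 * Real.exp 1)))
        + ((-1 + Real.sqrt (1 + 4 * Real.exp 1 * n)) / (2 * Real.exp 1)) / n
          * Real.logb 2 ((n - (-1 + Real.sqrt (1 + 4 * Real.exp 1 * n)) / (2 * Real.exp 1))
            / ((-1 + Real.sqrt (1 + 4 * Real.exp 1 * n)) / (2 * Real.exp 1)) ^ 2) := by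
  have hn0 : (0:ℝ) < n := by linarith
  set e := Real.exp 1 with he_def
  have he : 0 < e := Real.exp_pos 1
  set s := Real.sqrt (1 + 4 * e * n) with hs_def
  have hsnn : 0 ≤ s := Real.sqrt_nonneg _
  have hs2 : s ^ 2 = 1 + 4 * e * n := Real.sq_sqrt (by positivity)
  have hs1 : 1 < s := by nlinarith
  set j₀ := (-1 + s) / (2 * e) with hj₀_def
  have hj₀pos : 0 < j₀ := div_pos (by linarith) (by positivity)
  have hkey : e * j₀ ^ 2 = n - j₀ := by
    rw [hj₀_def]
    field_simp
    nlinarith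
  have hj₀n : j₀ < n := by
    have : 0 < e * j₀ ^ 2 := by positivity
    linarith
  have hnj₀ : 0 < n - j₀ := by linarith
  have hnj : 0 < n - j := by linarith
  have hlogC : Real.log (n - j₀) = 1 + 2 * Real.log j₀ := by
    rw [← hkey, Real.log_mul (by positivity) (by positivity), Real.log_pow, he_def,
      Real.log_exp]
    push_cast; ring
  rw [T_expand n j hn0 hj0 hjn, T_expand n j₀ hn0 hj₀pos hj₀n]
  have hden : 0 < n * Real.log 2 := by
    have := Real.log_pos (by norm_num : (1:ℝ) < 2); positivity
  rw [div_le_div_iff_of_pos_right hden]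
  have ha2 : (n - j) * (Real.log (n - j₀) - Real.log (n - j)) ≤ j - j₀ := by
    have h := Real.log_le_sub_one_of_pos (show 0 < (n - j₀) / (n - j) by positivity)
    rw [Real.log_div hnj₀.ne' hnj.ne'] at h
    have h2 := mul_le_mul_of_nonneg_left h hnj.le
    have heq : (n - j) * ((n - j₀) / (n - j) - 1) = j - j₀ := by field_simp; ring
    rw [heq] at h2
    exact h2
  have hb2 : j * (Real.log j₀ - Real.log j) ≤ j₀ - j := by
    have h := Real.log_le_sub_one_of_pos (show 0 < j₀ / j by positivity)
    rw [Real.log_div hj₀pos.ne' hj0.ne'] at h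
    have h2 := mul_le_mul_of_nonneg_left h hj0.le
    have heq : j * (j₀ / j - 1) = j₀ - j := by field_simp
    rw [heq] at h2
    exact h2
  rw [hlogC] at ha2 ⊢
  nlinarith [ha2, hb2]
end

section
/- For every integer n ≥ 4, the quantity T(n, j₀(n)) − (2/n)·log₂(√(2π)) + (1/n)·log₂(n/(2(n−2))) is at most 0.2052, where j₀(n) = (−1 + √(1 + 4en))/(2e); moreover this quantity, as a function of the integer n ≥ 4, attains its maximum at n = 16. -/
namespace Qaux
open Real

noncomputable def j (x : ℝ) : ℝ := (-1 + Real.sqrt (1 + 4 * Real.exp 1 * x)) / (2 * Real.exp 1)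
noncomputable def u (x : ℝ) : ℝ := 1 / (Real.exp 1 * j x)
noncomputable def R (x : ℝ) : ℝ :=
  Real.log (1 + u x) + u x / (1 + u x) - Real.log (2 * Real.pi) / x
    + Real.log (x / (2 * (x - 2))) / x

lemma s_sq {x : ℝ} (hx : 0 ≤ x) :
    (Real.sqrt (1 + 4 * Real.exp 1 * x)) ^ 2 = 1 + 4 * Real.exp 1 * x :=
  Real.sq_sqrt (by positivity)

lemma s_gt_one {x : ℝ} (hx : 1 ≤ x) : 1 < Real.sqrt (1 + 4 * Real.exp 1 * x) := by
  have hE := Real.exp_pos 1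
  have h1 : (1:ℝ) < 1 + 4 * Real.exp 1 * x := by nlinarith
  nlinarith [s_sq (le_trans zero_le_one hx), Real.sqrt_nonneg (1 + 4 * Real.exp 1 * x)]

lemma j_pos {x : ℝ} (hx : 1 ≤ x) : 0 < j x := by
  have h := s_gt_one hx
  have hE := Real.exp_pos 1
  unfold j
  apply div_pos (by linarith) (by linarith)

lemma key {x : ℝ} (hx : 1 ≤ x) : Real.exp 1 * (j x) ^ 2 + j x = x := by
  have hs := s_sq (le_trans zero_le_one hx)
  have hE := Real.exp_pos 1
  unfold j
  field_simp
  rw [show 1 + Real.exp 1 * 4 * x = 1 + 4 * Real.exp 1 * x by ring]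
  nlinarith [hs]

lemma u_pos {x : ℝ} (hx : 1 ≤ x) : 0 < u x := by
  have := j_pos hx
  have hE := Real.exp_pos 1
  unfold u
  positivity

lemma u_eq {x : ℝ} (hx : 1 ≤ x) :
    u x = 2 / (Real.sqrt (1 + 4 * Real.exp 1 * x) - 1) := by
  have h1 := s_gt_one hx
  have hE := Real.exp_pos 1
  have hej : Real.exp 1 * j x = (Real.sqrt (1 + 4 * Real.exp 1 * x) - 1) / 2 := by
    unfold j; field_simp; ring
  unfold u
  rw [hej, one_div_div]

lemma x_eq {x : ℝ} (hx : 1 ≤ x) : x * (Real.exp 1 * (u x) ^ 2) = 1 + u x := by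
  have hj := j_pos hx
  have hk := key hx
  have hE := Real.exp_pos 1
  unfold u
  field_simp
  nlinarith [hk]

lemma Q_eq {x : ℝ} (hx : 4 ≤ x) :
    (Real.logb 2 (x / (x - j x)) + j x / x * Real.logb 2 ((x - j x) / (j x) ^ 2))
      - 2 / x * Real.logb 2 (Real.sqrt (2 * Real.pi))
      + 1 / x * Real.logb 2 (x / (2 * (x - 2)))
    = R x / Real.log 2 := by
  have hx1 : (1:ℝ) ≤ x := by linarith
  have hj := j_pos hx1
  have hk := key hx1
  have hE := Real.exp_pos 1
  have hu := u_pos hx1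
  have hxj : x - j x = Real.exp 1 * (j x) ^ 2 := by linarith
  have h1 : x / (x - j x) = 1 + u x := by
    rw [hxj]; unfold u; field_simp; nlinarith [hk]
  have h2 : (x - j x) / (j x) ^ 2 = Real.exp 1 := by
    rw [hxj]; field_simp
  have h3 : j x / x = u x / (1 + u x) := by
    have hxpos : (0:ℝ) < x := by linarith
    rw [div_eq_div_iff (by linarith : x ≠ 0) (by linarith : (1:ℝ) + u x ≠ 0)]
    unfold u
    field_simp
    nlinarith [hk]
  have h4 : Real.logb 2 (Real.sqrt (2 * π)) = Real.log (2 * π) / (2 * Real.log 2) := by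
    rw [Real.logb, Real.log_sqrt (by positivity)]; ring
  rw [h1, h2, h3, h4]
  rw [Real.logb, Real.logb, Real.logb, Real.log_exp]
  unfold R
  have hl2 : Real.log 2 ≠ 0 := by
    have := Real.log_two_gt_d9; linarith
  have hxne : x ≠ 0 := by linarith
  field_simp

lemma log_one_add_le {y : ℝ} (h0 : 0 ≤ y) (h1 : y < 1) :
    Real.log (1 + y) ≤ y - y^2/2 + y^3/3 - y^4/4 + y^5/5 - y^6/6 + y^7/7 - y^8/8 + y^9/9
      + y^10/(1-y) := by
  have habs : |(-y)| < 1 := by rw [abs_neg, abs_of_nonneg h0]; exact h1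
  have H := Real.abs_log_sub_add_sum_range_le habs 9
  rw [abs_le] at H
  have h2 := H.2
  simp only [Finset.sum_range_succ, Finset.sum_range_zero] at h2
  rw [abs_neg, abs_of_nonneg h0] at h2
  have e : (1 : ℝ) - -y = 1 + y := by ring
  rw [e] at h2
  norm_num at h2
  nlinarith [h2]

lemma le_log_one_add {y : ℝ} (h0 : 0 ≤ y) (h1 : y < 1) :
    y - y^2/2 + y^3/3 - y^4/4 + y^5/5 - y^6/6 + y^7/7 - y^8/8 + y^9/9 - y^10/(1-y)
      ≤ Real.log (1 + y) := by
  have habs : |(-y)| < 1 := by rw [abs_neg, abs_of_nonneg h0]; exact h1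
  have H := Real.abs_log_sub_add_sum_range_le habs 9
  rw [abs_le] at H
  have h2 := H.1
  simp only [Finset.sum_range_succ, Finset.sum_range_zero] at h2
  rw [abs_neg, abs_of_nonneg h0] at h2
  have e : (1 : ℝ) - -y = 1 + y := by ring
  rw [e] at h2
  norm_num at h2
  nlinarith [h2]

lemma log_one_add_le3 {y : ℝ} (h0 : 0 ≤ y) (h1 : y < 1) :
    Real.log (1 + y) ≤ y - y^2/2 + y^3/3 + y^4/(1-y) := by
  have habs : |(-y)| < 1 := by rw [abs_neg, abs_of_nonneg h0]; exact h1
  have H := Real.abs_log_sub_add_sum_range_le habs 3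
  rw [abs_le] at H
  have h2 := H.2
  simp only [Finset.sum_range_succ, Finset.sum_range_zero] at h2
  rw [abs_neg, abs_of_nonneg h0] at h2
  have e : (1 : ℝ) - -y = 1 + y := by ring
  rw [e] at h2
  norm_num at h2
  nlinarith [h2]

lemma pi_div_e_mem : (1.1557273497 : ℝ) ≤ π / Real.exp 1 ∧ π / Real.exp 1 ≤ 1.1557273499 := by
  have h1 := Real.pi_gt_d20
  have h2 := Real.pi_lt_d20
  have h3 := Real.exp_one_gt_d9
  have h4 := Real.exp_one_lt_d9
  have hE := Real.exp_pos 1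
  constructor
  · rw [le_div_iff₀ hE]; nlinarith
  · rw [div_le_iff₀ hE]; nlinarith

lemma log_two_pi_gt : (1.8378770 : ℝ) < Real.log (2 * π) := by
  have hpi := Real.pi_pos
  have hE := Real.exp_pos 1
  have h : Real.log (2 * π) = Real.log 2 + 1 + Real.log (π / Real.exp 1) := by
    rw [Real.log_mul two_ne_zero (ne_of_gt hpi),
        Real.log_div (ne_of_gt hpi) (ne_of_gt hE), Real.log_exp]
    ring
  rw [h]
  have hm := pi_div_e_mem.1
  have hlog : Real.log (1 + 0.1557273497) ≤ Real.log (π / Real.exp 1) := by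
    apply Real.log_le_log (by norm_num)
    linarith
  have hser := le_log_one_add (y := 0.1557273497) (by norm_num) (by norm_num)
  have h2 := Real.log_two_gt_d9
  norm_num at hser ⊢
  linarith

lemma log_two_pi_lt : Real.log (2 * π) < 1.8378772 := by
  have hpi := Real.pi_pos
  have hE := Real.exp_pos 1
  have h : Real.log (2 * π) = Real.log 2 + 1 + Real.log (π / Real.exp 1) := by
    rw [Real.log_mul two_ne_zero (ne_of_gt hpi),
        Real.log_div (ne_of_gt hpi) (ne_of_gt hE), Real.log_exp]
    ring
  rw [h]
  have hm := pi_div_e_mem.2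
  have hlog : Real.log (π / Real.exp 1) ≤ Real.log (1 + 0.1557273499) := by
    apply Real.log_le_log (by positivity)
    linarith
  have hser := log_one_add_le (y := 0.1557273499) (by norm_num) (by norm_num)
  have h2 := Real.log_two_lt_d9
  norm_num at hser ⊢
  linarith

lemma u_bounds {x s1 s2 a b : ℝ} (hx : 1 ≤ x) (h1 : 1 < s1)
    (h2 : s1 ^ 2 ≤ 1 + 4 * Real.exp 1 * x) (h3 : 1 + 4 * Real.exp 1 * x ≤ s2 ^ 2)
    (h4 : 0 ≤ s2) (ha : a ≤ 2 / (s2 - 1)) (hb : 2 / (s1 - 1) ≤ b) :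
    a ≤ u x ∧ u x ≤ b := by
  have hsq := s_sq (le_trans zero_le_one hx)
  have hnn := Real.sqrt_nonneg (1 + 4 * Real.exp 1 * x)
  have hgt := s_gt_one hx
  have hs1 : s1 ≤ Real.sqrt (1 + 4 * Real.exp 1 * x) := by nlinarith
  have hs2 : Real.sqrt (1 + 4 * Real.exp 1 * x) ≤ s2 := by nlinarith
  have hs2' : 1 < s2 := lt_of_lt_of_le hgt hs2
  rw [u_eq hx]
  constructor
  · refine le_trans ha ?_
    rw [div_le_div_iff₀ (by linarith) (by linarith)]
    nlinarith
  · refine le_trans ?_ hb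
    rw [div_le_div_iff₀ (by linarith) (by linarith)]
    nlinarith

lemma R_le {x a b c₁ c₂ c₃ M : ℝ} (hx : 4 ≤ x) (ha : 0 < a) (hab : a ≤ u x) (hub : u x ≤ b)
    (h1 : Real.log (1 + b) ≤ c₁) (h2 : c₂ ≤ Real.log (2 * Real.pi))
    (h3 : Real.log (x / (2 * (x - 2))) ≤ c₃)
    (hM : c₁ + b / (1 + b) - c₂ / x + c₃ / x ≤ M) : R x ≤ M := by
  have hxpos : (0:ℝ) < x := by linarith
  have hu : 0 < u x := lt_of_lt_of_le ha hab
  have l1 : Real.log (1 + u x) ≤ Real.log (1 + b) :=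
    Real.log_le_log (by linarith) (by linarith)
  have l2 : u x / (1 + u x) ≤ b / (1 + b) := by
    rw [div_le_div_iff₀ (by linarith) (by linarith)]
    nlinarith
  have l3 : c₂ / x ≤ Real.log (2 * Real.pi) / x := (div_le_div_iff_of_pos_right hxpos).mpr h2
  have l4 : Real.log (x / (2 * (x - 2))) / x ≤ c₃ / x := (div_le_div_iff_of_pos_right hxpos).mpr h3
  unfold R
  linarith

lemma R_ge {x a b c₁ c₂ c₃ M : ℝ} (hx : 4 ≤ x) (ha : 0 < a) (hab : a ≤ u x) (hub : u x ≤ b)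
    (h1 : c₁ ≤ Real.log (1 + a)) (h2 : Real.log (2 * Real.pi) ≤ c₂)
    (h3 : c₃ ≤ Real.log (x / (2 * (x - 2))))
    (hM : M ≤ c₁ + a / (1 + a) - c₂ / x + c₃ / x) : M ≤ R x := by
  have hxpos : (0:ℝ) < x := by linarith
  have hu : 0 < u x := lt_of_lt_of_le ha hab
  have l1 : Real.log (1 + a) ≤ Real.log (1 + u x) :=
    Real.log_le_log (by linarith) (by linarith)
  have l2 : a / (1 + a) ≤ u x / (1 + u x) := by
    rw [div_le_div_iff₀ (by linarith) (by linarith)]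
    nlinarith
  have l3 : Real.log (2 * Real.pi) / x ≤ c₂ / x := (div_le_div_iff_of_pos_right hxpos).mpr h2
  have l4 : c₃ / x ≤ Real.log (x / (2 * (x - 2))) / x := (div_le_div_iff_of_pos_right hxpos).mpr h3
  unfold R
  linarith

set_option maxHeartbeats 1000000 in
lemma R_tail {x : ℝ} (hx : 24 ≤ x) : R x ≤ 0.14216 := by
  have hx1 : (1:ℝ) ≤ x := by linarith
  have hxpos : (0:ℝ) < x := by linarith
  have hx2 : (0:ℝ) < x - 2 := by linarith
  have h0 : 0 < u x := u_pos hx1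
  set v := u x with hv
  have hxe := x_eq hx1
  have hE1 := Real.exp_one_gt_d9
  have hE2 := Real.exp_one_lt_d9
  have hEp := Real.exp_pos 1
  have hvb : v ≤ 0.1318 := by
    rw [hv, u_eq hx1]
    have hs : (16.184 : ℝ) ≤ Real.sqrt (1 + 4 * Real.exp 1 * x) := by
      nlinarith [s_sq (by linarith : (0:ℝ) ≤ x), Real.sqrt_nonneg (1 + 4 * Real.exp 1 * x)]
    have hpos : (0:ℝ) < Real.sqrt (1 + 4 * Real.exp 1 * x) - 1 := by linarith
    rw [div_le_iff₀ hpos]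
    nlinarith
  have hv1 : v < 1 := by norm_num at hvb ⊢; linarith
  have hxv : x = (1 + v) / (Real.exp 1 * v ^ 2) := by
    rw [eq_div_iff (by positivity)]
    linarith [hxe]
  have ht1 : 1 / x ≤ 2.7182818286 * v ^ 2 := by
    rw [hxv, one_div_div, div_le_iff₀ (by linarith : (0:ℝ) < 1 + v)]
    nlinarith [sq_nonneg v, mul_pos (mul_pos h0 h0) h0]
  have ht2 : 2.7182818283 * (v ^ 2 - v ^ 3) ≤ 1 / x := by
    rw [hxv, one_div_div, le_div_iff₀ (by linarith : (0:ℝ) < 1 + v)]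
    nlinarith [sq_nonneg (v * v), sq_nonneg v]
  have hA : Real.log (1 + v) ≤ v - v ^ 2 / 2 + v ^ 3 / 3 + 1.16 * v ^ 4 := by
    have h := log_one_add_le3 h0.le hv1
    have h4 : v ^ 4 / (1 - v) ≤ 1.16 * v ^ 4 := by
      rw [div_le_iff₀ (by linarith : (0:ℝ) < 1 - v)]
      nlinarith [pow_pos h0 4]
    norm_num at h ⊢
    linarith
  have hB : v / (1 + v) ≤ v - v ^ 2 + v ^ 3 := by
    rw [div_le_iff₀ (by linarith : (0:ℝ) < 1 + v)]
    nlinarith [pow_pos h0 4]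
  have hC : -(Real.log (2 * π) / x) ≤ -(1.8378770 * (2.7182818283 * (v ^ 2 - v ^ 3))) := by
    have hl := log_two_pi_gt
    have h1 : (1.8378770 : ℝ) / x ≤ Real.log (2 * π) / x :=
      (div_le_div_iff_of_pos_right hxpos).mpr hl.le
    have h2 : (1.8378770 : ℝ) * (2.7182818283 * (v ^ 2 - v ^ 3)) ≤ 1.8378770 * (1/x) := by
      nlinarith [ht2]
    have h3 : (1.8378770 : ℝ) * (1/x) = 1.8378770 / x := by ring
    linarith
  have hD : Real.log (x / (2 * (x - 2))) / x
      ≤ 16.122 * v ^ 4 - 0.6931471803 * (2.7182818283 * (v ^ 2 - v ^ 3)) := by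
    have hr : (0:ℝ) < x / (x - 2) := by positivity
    have hsplit : Real.log (x / (2 * (x - 2))) = Real.log (x / (x - 2)) - Real.log 2 := by
      rw [show x / (2 * (x - 2)) = x / (x - 2) / 2 by rw [div_div, mul_comm],
        Real.log_div (ne_of_gt hr) two_ne_zero]
    have hd1 : Real.log (x / (x - 2)) ≤ 2 / (x - 2) := by
      have h := Real.log_le_sub_one_of_pos hr
      have heq : x / (x - 2) - 1 = 2 / (x - 2) := by
        rw [div_sub_one (ne_of_gt hx2)]
        ring_nf
      linarith [heq ▸ h]
    have hd2 : 2 / (x - 2) / x ≤ 16.122 * v ^ 4 := by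
      rw [div_div]
      have h1 : 2 / ((x - 2) * x) ≤ (24/11) / x ^ 2 := by
        rw [div_le_div_iff₀ (by nlinarith) (by positivity)]
        nlinarith
      have hsq : (1 / x) ^ 2 ≤ (2.7182818286 * v ^ 2) ^ 2 :=
        pow_le_pow_left₀ (by positivity) ht1 2
      have e2 : (24/11 : ℝ) / x ^ 2 = (24/11) * (1/x) ^ 2 := by ring
      have h2 : (24/11 : ℝ) / x ^ 2 ≤ 16.122 * v ^ 4 := by
        rw [e2]
        nlinarith [hsq, pow_nonneg h0.le 4]
      linarith
    have hd3 : -(Real.log 2 / x) ≤ -(0.6931471803 * (2.7182818283 * (v ^ 2 - v ^ 3))) := by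
      have hl := Real.log_two_gt_d9
      have h1 : (0.6931471803 : ℝ) / x ≤ Real.log 2 / x :=
        (div_le_div_iff_of_pos_right hxpos).mpr (by norm_num at hl ⊢; linarith)
      have h2 : (0.6931471803 : ℝ) * (2.7182818283 * (v ^ 2 - v ^ 3)) ≤ 0.6931471803 * (1/x) := by
        nlinarith [ht2]
      have h3 : (0.6931471803 : ℝ) * (1/x) = 0.6931471803 / x := by ring
      linarith
    have hfin : Real.log (x / (2 * (x - 2))) / x = Real.log (x / (x - 2)) / x - Real.log 2 / x := by
      rw [hsplit]; ring
    rw [hfin]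
    have hd1' : Real.log (x / (x - 2)) / x ≤ 2 / (x - 2) / x :=
      (div_le_div_iff_of_pos_right hxpos).mpr hd1
    linarith
  have hsum : R x ≤ 2*v - 8.38003*v^2 + 8.21338*v^3 + 17.282*v^4 := by
    rw [show R x = Real.log (1 + v) + v / (1 + v) + (-(Real.log (2*π)/x))
        + Real.log (x / (2 * (x - 2))) / x by rw [hv]; unfold R; ring]
    linarith [hA, hB, hC, hD, sq_nonneg v, pow_nonneg h0.le 3, pow_nonneg h0.le 4]
  nlinarith [sq_nonneg (v - 0.1318), sq_nonneg v, mul_pos h0 h0,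
    mul_nonneg (mul_nonneg h0.le h0.le) h0.le,
    mul_nonneg (sq_nonneg (v - 0.1318)) h0.le,
    mul_nonneg (sq_nonneg (v - 0.1318)) (sq_nonneg v)]

lemma Rn4 : R 4 ≤ (0.14216 : ℝ) := by
  have hE1 := Real.exp_one_gt_d9
  have hE2 := Real.exp_one_lt_d9
  obtain ⟨hua, hub⟩ := u_bounds (x := 4) (s1 := (133405411/20000000 : ℝ))
    (s2 := (41689191/6250000 : ℝ)) (a := (35271685519/100000000000 : ℝ)) (b := (352716855813/1000000000000 : ℝ))
    (by norm_num) (by norm_num) (by nlinarith) (by nlinarith) (by norm_num) (by norm_num)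
    (by norm_num)
  refine R_le (c₁ := (755408393/2500000000 : ℝ)) (c₂ := (1.8378770 : ℝ)) (c₃ := (0/1 : ℝ))
    (by norm_num) (by norm_num) hua hub ?_ log_two_pi_gt.le ?_ (by norm_num)
  · have h := log_one_add_le (y := (352716855813/1000000000000 : ℝ)) (by norm_num) (by norm_num)
    norm_num at h ⊢
    linarith
  · rw [show (4:ℝ)/(2*(4-2)) = 1 by norm_num, Real.log_one]
    norm_num

lemma Rn5 : R 5 ≤ (0.14216 : ℝ) := by
  have hE1 := Real.exp_one_gt_d9
  have hE2 := Real.exp_one_lt_d9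
  obtain ⟨hua, hub⟩ := u_bounds (x := 5) (s1 := (372040443/50000000 : ℝ))
    (s2 := (744080887/100000000 : ℝ)) (a := (310520004609/1000000000000 : ℝ)) (b := (77630001273/250000000000 : ℝ))
    (by norm_num) (by norm_num) (by nlinarith) (by nlinarith) (by norm_num) (by norm_num)
    (by norm_num)
  refine R_le (c₁ := (1352183739/5000000000 : ℝ)) (c₂ := (1.8378770 : ℝ)) (c₃ := (-20189977/156250000 : ℝ))
    (by norm_num) (by norm_num) hua hub ?_ log_two_pi_gt.le ?_ (by norm_num)
  · have h := log_one_add_le (y := (77630001273/250000000000 : ℝ)) (by norm_num) (by norm_num)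
    norm_num at h ⊢
    linarith
  · rw [show (5:ℝ)/(2*(5-2)) = (1 + 2/3)/2 by norm_num,
      Real.log_div (by norm_num) two_ne_zero]
    have h := log_one_add_le (y := (2/3 : ℝ)) (by norm_num) (by norm_num)
    have h2 := Real.log_two_gt_d9
    norm_num at h h2 ⊢
    linarith

lemma Rn6 : R 6 ≤ (0.14216 : ℝ) := by
  have hE1 := Real.exp_one_gt_d9
  have hE2 := Real.exp_one_lt_d9
  obtain ⟨hua, hub⟩ := u_bounds (x := 6) (s1 := (813872003/100000000 : ℝ))
    (s2 := (203468001/25000000 : ℝ)) (a := (1094383861/3906250000 : ℝ)) (b := (28016226881/100000000000 : ℝ))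
    (by norm_num) (by norm_num) (by nlinarith) (by nlinarith) (by norm_num) (by norm_num)
    (by norm_num)
  refine R_le (c₁ := (2469912187/10000000000 : ℝ)) (c₂ := (1.8378770 : ℝ)) (c₃ := (-357077189/1250000000 : ℝ))
    (by norm_num) (by norm_num) hua hub ?_ log_two_pi_gt.le ?_ (by norm_num)
  · have h := log_one_add_le (y := (28016226881/100000000000 : ℝ)) (by norm_num) (by norm_num)
    norm_num at h ⊢
    linarith
  · rw [show (6:ℝ)/(2*(6-2)) = (1 + 1/2)/2 by norm_num,
      Real.log_div (by norm_num) two_ne_zero]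
    have h := log_one_add_le (y := (1/2 : ℝ)) (by norm_num) (by norm_num)
    have h2 := Real.log_two_gt_d9
    norm_num at h h2 ⊢
    linarith

lemma Rn7 : R 7 ≤ (0.14216 : ℝ) := by
  have hE1 := Real.exp_one_gt_d9
  have hE2 := Real.exp_one_lt_d9
  obtain ⟨hua, hub⟩ := u_bounds (x := 7) (s1 := (439066883/50000000 : ℝ))
    (s2 := (878133767/100000000 : ℝ)) (a := (257025216591/1000000000000 : ℝ)) (b := (128512608461/500000000000 : ℝ))
    (by norm_num) (by norm_num) (by nlinarith) (by nlinarith) (by norm_num) (by norm_num)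
    (by norm_num)
  refine R_le (c₁ := (1143748931/5000000000 : ℝ)) (c₂ := (1.8378770 : ℝ)) (c₃ := (-3564924867/10000000000 : ℝ))
    (by norm_num) (by norm_num) hua hub ?_ log_two_pi_gt.le ?_ (by norm_num)
  · have h := log_one_add_le (y := (128512608461/500000000000 : ℝ)) (by norm_num) (by norm_num)
    norm_num at h ⊢
    linarith
  · rw [show (7:ℝ)/(2*(7-2)) = (1 + 2/5)/2 by norm_num,
      Real.log_div (by norm_num) two_ne_zero]
    have h := log_one_add_le (y := (2/5 : ℝ)) (by norm_num) (by norm_num)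
    have h2 := Real.log_two_gt_d9
    norm_num at h h2 ⊢
    linarith

lemma Rn8 : R 8 ≤ (0.14216 : ℝ) := by
  have hE1 := Real.exp_one_gt_d9
  have hE2 := Real.exp_one_lt_d9
  obtain ⟨hua, hub⟩ := u_bounds (x := 8) (s1 := (29312603/3125000 : ℝ))
    (s2 := (938003297/100000000 : ℝ)) (a := (477325091/2000000000 : ℝ)) (b := (119331272893/500000000000 : ℝ))
    (by norm_num) (by norm_num) (by nlinarith) (by nlinarith) (by norm_num) (by norm_num)
    (by norm_num)
  refine R_le (c₁ := (2140330423/10000000000 : ℝ)) (c₂ := (1.8378770 : ℝ)) (c₃ := (-4054384049/10000000000 : ℝ))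
    (by norm_num) (by norm_num) hua hub ?_ log_two_pi_gt.le ?_ (by norm_num)
  · have h := log_one_add_le (y := (119331272893/500000000000 : ℝ)) (by norm_num) (by norm_num)
    norm_num at h ⊢
    linarith
  · rw [show (8:ℝ)/(2*(8-2)) = (1 + 1/3)/2 by norm_num,
      Real.log_div (by norm_num) two_ne_zero]
    have h := log_one_add_le (y := (1/3 : ℝ)) (by norm_num) (by norm_num)
    have h2 := Real.log_two_gt_d9
    norm_num at h h2 ⊢
    linarith

lemma Rn9 : R 9 ≤ (0.14216 : ℝ) := by
  have hE1 := Real.exp_one_gt_d9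
  have hE2 := Real.exp_one_lt_d9
  obtain ⟨hua, hub⟩ := u_bounds (x := 9) (s1 := (994274337/100000000 : ℝ))
    (s2 := (497137169/50000000 : ℝ)) (a := (223645017531/1000000000000 : ℝ)) (b := (111822508891/500000000000 : ℝ))
    (by norm_num) (by norm_num) (by nlinarith) (by nlinarith) (by norm_num) (by norm_num)
    (by norm_num)
  refine R_le (c₁ := (504586383/2500000000 : ℝ)) (c₂ := (1.8378770 : ℝ)) (c₃ := (-441827389/1000000000 : ℝ))
    (by norm_num) (by norm_num) hua hub ?_ log_two_pi_gt.le ?_ (by norm_num)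
  · have h := log_one_add_le (y := (111822508891/500000000000 : ℝ)) (by norm_num) (by norm_num)
    norm_num at h ⊢
    linarith
  · rw [show (9:ℝ)/(2*(9-2)) = (1 + 2/7)/2 by norm_num,
      Real.log_div (by norm_num) two_ne_zero]
    have h := log_one_add_le (y := (2/7 : ℝ)) (by norm_num) (by norm_num)
    have h2 := Real.log_two_gt_d9
    norm_num at h h2 ⊢
    linarith

lemma Rn10 : R 10 ≤ (0.14216 : ℝ) := by
  have hE1 := Real.exp_one_gt_d9
  have hE2 := Real.exp_one_lt_d9
  obtain ⟨hua, hub⟩ := u_bounds (x := 10) (s1 := (1047526959/100000000 : ℝ))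
    (s2 := (13094087/1250000 : ℝ)) (a := (211075788281/1000000000000 : ℝ)) (b := (42215157701/200000000000 : ℝ))
    (by norm_num) (by norm_num) (by nlinarith) (by nlinarith) (by norm_num) (by norm_num)
    (by norm_num)
  refine R_le (c₁ := (1915092833/10000000000 : ℝ)) (c₂ := (1.8378770 : ℝ)) (c₃ := (-1175005699/2500000000 : ℝ))
    (by norm_num) (by norm_num) hua hub ?_ log_two_pi_gt.le ?_ (by norm_num)
  · have h := log_one_add_le (y := (42215157701/200000000000 : ℝ)) (by norm_num) (by norm_num)
    norm_num at h ⊢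
    linarith
  · rw [show (10:ℝ)/(2*(10-2)) = (1 + 1/4)/2 by norm_num,
      Real.log_div (by norm_num) two_ne_zero]
    have h := log_one_add_le (y := (1/4 : ℝ)) (by norm_num) (by norm_num)
    have h2 := Real.log_two_gt_d9
    norm_num at h h2 ⊢
    linarith

lemma Rn11 : R 11 ≤ (0.14216 : ℝ) := by
  have hE1 := Real.exp_one_gt_d9
  have hE2 := Real.exp_one_lt_d9
  obtain ⟨hua, hub⟩ := u_bounds (x := 11) (s1 := (274550087/25000000 : ℝ))
    (s2 := (1098200349/100000000 : ℝ)) (a := (50090144779/250000000000 : ℝ)) (b := (100180289659/500000000000 : ℝ))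
    (by norm_num) (by norm_num) (by nlinarith) (by nlinarith) (by norm_num) (by norm_num)
    (by norm_num)
  refine R_le (c₁ := (1826221337/10000000000 : ℝ)) (c₂ := (1.8378770 : ℝ)) (c₃ := (-1231190207/2500000000 : ℝ))
    (by norm_num) (by norm_num) hua hub ?_ log_two_pi_gt.le ?_ (by norm_num)
  · have h := log_one_add_le (y := (100180289659/500000000000 : ℝ)) (by norm_num) (by norm_num)
    norm_num at h ⊢
    linarith
  · rw [show (11:ℝ)/(2*(11-2)) = (1 + 2/9)/2 by norm_num,
      Real.log_div (by norm_num) two_ne_zero]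
    have h := log_one_add_le (y := (2/9 : ℝ)) (by norm_num) (by norm_num)
    have h2 := Real.log_two_gt_d9
    norm_num at h h2 ⊢
    linarith

lemma Rn12 : R 12 ≤ (0.14216 : ℝ) := by
  have hE1 := Real.exp_one_gt_d9
  have hE2 := Real.exp_one_lt_d9
  obtain ⟨hua, hub⟩ := u_bounds (x := 12) (s1 := (573318253/50000000 : ℝ))
    (s2 := (1146636507/100000000 : ℝ)) (a := (191088308751/1000000000000 : ℝ)) (b := (95544154467/500000000000 : ℝ))
    (by norm_num) (by norm_num) (by nlinarith) (by nlinarith) (by norm_num) (by norm_num)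
    (by norm_num)
  refine R_le (c₁ := (1748675203/10000000000 : ℝ)) (c₂ := (1.8378770 : ℝ)) (c₃ := (-1277063717/2500000000 : ℝ))
    (by norm_num) (by norm_num) hua hub ?_ log_two_pi_gt.le ?_ (by norm_num)
  · have h := log_one_add_le (y := (95544154467/500000000000 : ℝ)) (by norm_num) (by norm_num)
    norm_num at h ⊢
    linarith
  · rw [show (12:ℝ)/(2*(12-2)) = (1 + 1/5)/2 by norm_num,
      Real.log_div (by norm_num) two_ne_zero]
    have h := log_one_add_le (y := (1/5 : ℝ)) (by norm_num) (by norm_num)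
    have h2 := Real.log_two_gt_d9
    norm_num at h h2 ⊢
    linarith

lemma Rn13 : R 13 ≤ (0.14216 : ℝ) := by
  have hE1 := Real.exp_one_gt_d9
  have hE2 := Real.exp_one_lt_d9
  obtain ⟨hua, hub⟩ := u_bounds (x := 13) (s1 := (1193107937/100000000 : ℝ))
    (s2 := (596553969/50000000 : ℝ)) (a := (18296454819/100000000000 : ℝ)) (b := (182964548359/1000000000000 : ℝ))
    (by norm_num) (by norm_num) (by nlinarith) (by nlinarith) (by norm_num) (by norm_num)
    (by norm_num)
  refine R_le (c₁ := (1680236721/10000000000 : ℝ)) (c₂ := (1.8378770 : ℝ)) (c₃ := (-5260930439/10000000000 : ℝ))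
    (by norm_num) (by norm_num) hua hub ?_ log_two_pi_gt.le ?_ (by norm_num)
  · have h := log_one_add_le (y := (182964548359/1000000000000 : ℝ)) (by norm_num) (by norm_num)
    norm_num at h ⊢
    linarith
  · rw [show (13:ℝ)/(2*(13-2)) = (1 + 2/11)/2 by norm_num,
      Real.log_div (by norm_num) two_ne_zero]
    have h := log_one_add_le (y := (2/11 : ℝ)) (by norm_num) (by norm_num)
    have h2 := Real.log_two_gt_d9
    norm_num at h h2 ⊢
    linarith

lemma Rn14 : R 14 ≤ (0.14216 : ℝ) := by
  have hE1 := Real.exp_one_gt_d9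
  have hE2 := Real.exp_one_lt_d9
  obtain ⟨hua, hub⟩ := u_bounds (x := 14) (s1 := (1237835943/100000000 : ℝ))
    (s2 := (154729493/12500000 : ℝ)) (a := (87886132027/500000000000 : ℝ)) (b := (17577226421/100000000000 : ℝ))
    (by norm_num) (by norm_num) (by nlinarith) (by nlinarith) (by norm_num) (by norm_num)
    (by norm_num)
  refine R_le (c₁ := (323850429/2000000000 : ℝ)) (c₂ := (1.8378770 : ℝ)) (c₃ := (-5389964791/10000000000 : ℝ))
    (by norm_num) (by norm_num) hua hub ?_ log_two_pi_gt.le ?_ (by norm_num)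
  · have h := log_one_add_le (y := (17577226421/100000000000 : ℝ)) (by norm_num) (by norm_num)
    norm_num at h ⊢
    linarith
  · rw [show (14:ℝ)/(2*(14-2)) = (1 + 1/6)/2 by norm_num,
      Real.log_div (by norm_num) two_ne_zero]
    have h := log_one_add_le (y := (1/6 : ℝ)) (by norm_num) (by norm_num)
    have h2 := Real.log_two_gt_d9
    norm_num at h h2 ⊢
    linarith

lemma Rn15 : R 15 ≤ (0.14216 : ℝ) := by
  have hE1 := Real.exp_one_gt_d9
  have hE2 := Real.exp_one_lt_d9
  obtain ⟨hua, hub⟩ := u_bounds (x := 15) (s1 := (32025079/2500000 : ℝ))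
    (s2 := (1281003161/100000000 : ℝ)) (a := (84673778447/500000000000 : ℝ)) (b := (84673778519/500000000000 : ℝ))
    (by norm_num) (by norm_num) (by nlinarith) (by nlinarith) (by norm_num) (by norm_num)
    (by norm_num)
  refine R_le (c₁ := (391114937/2500000000 : ℝ)) (c₂ := (1.8378770 : ℝ)) (c₃ := (-687557909/1250000000 : ℝ))
    (by norm_num) (by norm_num) hua hub ?_ log_two_pi_gt.le ?_ (by norm_num)
  · have h := log_one_add_le (y := (84673778519/500000000000 : ℝ)) (by norm_num) (by norm_num)
    norm_num at h ⊢
    linarith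
  · rw [show (15:ℝ)/(2*(15-2)) = (1 + 2/13)/2 by norm_num,
      Real.log_div (by norm_num) two_ne_zero]
    have h := log_one_add_le (y := (2/13 : ℝ)) (by norm_num) (by norm_num)
    have h2 := Real.log_two_gt_d9
    norm_num at h h2 ⊢
    linarith

lemma Rn16 : R 16 ≤ (0.1422333 : ℝ) := by
  have hE1 := Real.exp_one_gt_d9
  have hE2 := Real.exp_one_lt_d9
  obtain ⟨hua, hub⟩ := u_bounds (x := 16) (s1 := (1322762401/100000000 : ℝ))
    (s2 := (661381201/50000000 : ℝ)) (a := (32712814799/200000000000 : ℝ)) (b := (16356407413/100000000000 : ℝ))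
    (by norm_num) (by norm_num) (by nlinarith) (by nlinarith) (by norm_num) (by norm_num)
    (by norm_num)
  refine R_le (c₁ := (15148779/100000000 : ℝ)) (c₂ := (1.8378770 : ℝ)) (c₃ := (-699519729/1250000000 : ℝ))
    (by norm_num) (by norm_num) hua hub ?_ log_two_pi_gt.le ?_ (by norm_num)
  · have h := log_one_add_le (y := (16356407413/100000000000 : ℝ)) (by norm_num) (by norm_num)
    norm_num at h ⊢
    linarith
  · rw [show (16:ℝ)/(2*(16-2)) = (1 + 1/7)/2 by norm_num,
      Real.log_div (by norm_num) two_ne_zero]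
    have h := log_one_add_le (y := (1/7 : ℝ)) (by norm_num) (by norm_num)
    have h2 := Real.log_two_gt_d9
    norm_num at h h2 ⊢
    linarith

lemma Rn17 : R 17 ≤ (0.14216 : ℝ) := by
  have hE1 := Real.exp_one_gt_d9
  have hE2 := Real.exp_one_lt_d9
  obtain ⟨hua, hub⟩ := u_bounds (x := 17) (s1 := (68162153/5000000 : ℝ))
    (s2 := (681621531/50000000 : ℝ)) (a := (158322658573/1000000000000 : ℝ)) (b := (19790332353/125000000000 : ℝ))
    (by norm_num) (by norm_num) (by nlinarith) (by nlinarith) (by norm_num) (by norm_num)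
    (by norm_num)
  refine R_le (c₁ := (367432469/2500000000 : ℝ)) (c₂ := (1.8378770 : ℝ)) (c₃ := (-5679840351/10000000000 : ℝ))
    (by norm_num) (by norm_num) hua hub ?_ log_two_pi_gt.le ?_ (by norm_num)
  · have h := log_one_add_le (y := (19790332353/125000000000 : ℝ)) (by norm_num) (by norm_num)
    norm_num at h ⊢
    linarith
  · rw [show (17:ℝ)/(2*(17-2)) = (1 + 2/15)/2 by norm_num,
      Real.log_div (by norm_num) two_ne_zero]
    have h := log_one_add_le (y := (2/15 : ℝ)) (by norm_num) (by norm_num)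
    have h2 := Real.log_two_gt_d9
    norm_num at h h2 ⊢
    linarith

lemma Rn18 : R 18 ≤ (0.14216 : ℝ) := by
  have hE1 := Real.exp_one_gt_d9
  have hE2 := Real.exp_one_lt_d9
  obtain ⟨hua, hub⟩ := u_bounds (x := 18) (s1 := (1402555851/100000000 : ℝ))
    (s2 := (350638963/25000000 : ℝ)) (a := (3070885593/20000000000 : ℝ)) (b := (153544279769/1000000000000 : ℝ))
    (by norm_num) (by norm_num) (by nlinarith) (by nlinarith) (by norm_num) (by norm_num)
    (by norm_num)
  refine R_le (c₁ := (285678389/2000000000 : ℝ)) (c₂ := (1.8378770 : ℝ)) (c₃ := (-2876820717/5000000000 : ℝ))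
    (by norm_num) (by norm_num) hua hub ?_ log_two_pi_gt.le ?_ (by norm_num)
  · have h := log_one_add_le (y := (153544279769/1000000000000 : ℝ)) (by norm_num) (by norm_num)
    norm_num at h ⊢
    linarith
  · rw [show (18:ℝ)/(2*(18-2)) = (1 + 1/8)/2 by norm_num,
      Real.log_div (by norm_num) two_ne_zero]
    have h := log_one_add_le (y := (1/8 : ℝ)) (by norm_num) (by norm_num)
    have h2 := Real.log_two_gt_d9
    norm_num at h h2 ⊢
    linarith

lemma Rn19 : R 19 ≤ (0.14216 : ℝ) := by
  have hE1 := Real.exp_one_gt_d9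
  have hE2 := Real.exp_one_lt_d9
  obtain ⟨hua, hub⟩ := u_bounds (x := 19) (s1 := (1440796373/100000000 : ℝ))
    (s2 := (720398187/50000000 : ℝ)) (a := (149165081199/1000000000000 : ℝ)) (b := (149165081311/1000000000000 : ℝ))
    (by norm_num) (by norm_num) (by nlinarith) (by nlinarith) (by norm_num) (by norm_num)
    (by norm_num)
  refine R_le (c₁ := (695178347/5000000000 : ℝ)) (c₂ := (1.8378770 : ℝ)) (c₃ := (-1163843089/2000000000 : ℝ))
    (by norm_num) (by norm_num) hua hub ?_ log_two_pi_gt.le ?_ (by norm_num)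
  · have h := log_one_add_le (y := (149165081311/1000000000000 : ℝ)) (by norm_num) (by norm_num)
    norm_num at h ⊢
    linarith
  · rw [show (19:ℝ)/(2*(19-2)) = (1 + 2/17)/2 by norm_num,
      Real.log_div (by norm_num) two_ne_zero]
    have h := log_one_add_le (y := (2/17 : ℝ)) (by norm_num) (by norm_num)
    have h2 := Real.log_two_gt_d9
    norm_num at h h2 ⊢
    linarith

lemma Rn20 : R 20 ≤ (0.14216 : ℝ) := by
  have hE1 := Real.exp_one_gt_d9
  have hE2 := Real.exp_one_lt_d9
  obtain ⟨hua, hub⟩ := u_bounds (x := 20) (s1 := (295609571/20000000 : ℝ))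
    (s2 := (92377991/6250000 : ℝ)) (a := (145132840727/1000000000000 : ℝ)) (b := (72566420417/500000000000 : ℝ))
    (by norm_num) (by norm_num) (by nlinarith) (by nlinarith) (by norm_num) (by norm_num)
    (by norm_num)
  refine R_le (c₁ := (1355206537/10000000000 : ℝ)) (c₂ := (1.8378770 : ℝ)) (c₃ := (-2938933321/5000000000 : ℝ))
    (by norm_num) (by norm_num) hua hub ?_ log_two_pi_gt.le ?_ (by norm_num)
  · have h := log_one_add_le (y := (72566420417/500000000000 : ℝ)) (by norm_num) (by norm_num)
    norm_num at h ⊢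
    linarith
  · rw [show (20:ℝ)/(2*(20-2)) = (1 + 1/9)/2 by norm_num,
      Real.log_div (by norm_num) two_ne_zero]
    have h := log_one_add_le (y := (1/9 : ℝ)) (by norm_num) (by norm_num)
    have h2 := Real.log_two_gt_d9
    norm_num at h h2 ⊢
    linarith

lemma Rn21 : R 21 ≤ (0.14216 : ℝ) := by
  have hE1 := Real.exp_one_gt_d9
  have hE2 := Real.exp_one_lt_d9
  obtain ⟨hua, hub⟩ := u_bounds (x := 21) (s1 := (302876657/20000000 : ℝ))
    (s2 := (757191643/50000000 : ℝ)) (a := (141404385911/1000000000000 : ℝ)) (b := (35351096503/250000000000 : ℝ))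
    (by norm_num) (by norm_num) (by nlinarith) (by nlinarith) (by norm_num) (by norm_num)
    (by norm_num)
  refine R_le (c₁ := (661297129/5000000000 : ℝ)) (c₂ := (1.8378770 : ℝ)) (c₃ := (-1186127443/2000000000 : ℝ))
    (by norm_num) (by norm_num) hua hub ?_ log_two_pi_gt.le ?_ (by norm_num)
  · have h := log_one_add_le (y := (35351096503/250000000000 : ℝ)) (by norm_num) (by norm_num)
    norm_num at h ⊢
    linarith
  · rw [show (21:ℝ)/(2*(21-2)) = (1 + 2/19)/2 by norm_num,
      Real.log_div (by norm_num) two_ne_zero]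
    have h := log_one_add_le (y := (2/19 : ℝ)) (by norm_num) (by norm_num)
    have h2 := Real.log_two_gt_d9
    norm_num at h h2 ⊢
    linarith

lemma Rn22 : R 22 ≤ (0.14216 : ℝ) := by
  have hE1 := Real.exp_one_gt_d9
  have hE2 := Real.exp_one_lt_d9
  obtain ⟨hua, hub⟩ := u_bounds (x := 22) (s1 := (1549867093/100000000 : ℝ))
    (s2 := (309973419/20000000 : ℝ)) (a := (13794367821/100000000000 : ℝ)) (b := (137943678401/1000000000000 : ℝ))
    (by norm_num) (by norm_num) (by nlinarith) (by nlinarith) (by norm_num) (by norm_num)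
    (by norm_num)
  refine R_le (c₁ := (1292228459/10000000000 : ℝ)) (c₂ := (1.8378770 : ℝ)) (c₃ := (-5978370003/10000000000 : ℝ))
    (by norm_num) (by norm_num) hua hub ?_ log_two_pi_gt.le ?_ (by norm_num)
  · have h := log_one_add_le (y := (137943678401/1000000000000 : ℝ)) (by norm_num) (by norm_num)
    norm_num at h ⊢
    linarith
  · rw [show (22:ℝ)/(2*(22-2)) = (1 + 1/10)/2 by norm_num,
      Real.log_div (by norm_num) two_ne_zero]
    have h := log_one_add_le (y := (1/10 : ℝ)) (by norm_num) (by norm_num)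
    have h2 := Real.log_two_gt_d9
    norm_num at h h2 ⊢
    linarith

lemma Rn23 : R 23 ≤ (0.14216 : ℝ) := by
  have hE1 := Real.exp_one_gt_d9
  have hE2 := Real.exp_one_lt_d9
  obtain ⟨hua, hub⟩ := u_bounds (x := 23) (s1 := (1584556493/100000000 : ℝ))
    (s2 := (792278247/50000000 : ℝ)) (a := (134720369893/1000000000000 : ℝ)) (b := (26944073997/200000000000 : ℝ))
    (by norm_num) (by norm_num) (by nlinarith) (by nlinarith) (by norm_num) (by norm_num)
    (by norm_num)
  refine R_le (c₁ := (126386253/1000000000 : ℝ)) (c₂ := (1.8378770 : ℝ)) (c₃ := (-301087701/500000000 : ℝ))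
    (by norm_num) (by norm_num) hua hub ?_ log_two_pi_gt.le ?_ (by norm_num)
  · have h := log_one_add_le (y := (26944073997/200000000000 : ℝ)) (by norm_num) (by norm_num)
    norm_num at h ⊢
    linarith
  · rw [show (23:ℝ)/(2*(23-2)) = (1 + 2/21)/2 by norm_num,
      Real.log_div (by norm_num) two_ne_zero]
    have h := log_one_add_le (y := (2/21 : ℝ)) (by norm_num) (by norm_num)
    have h2 := Real.log_two_gt_d9
    norm_num at h h2 ⊢
    linarith

lemma R16_ge : (0.14216 : ℝ) ≤ R 16 := by
  have hE1 := Real.exp_one_gt_d9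
  have hE2 := Real.exp_one_lt_d9
  obtain ⟨hua, hub⟩ := u_bounds (x := 16) (s1 := (1322762401/100000000 : ℝ))
    (s2 := (661381201/50000000 : ℝ)) (a := (32712814799/200000000000 : ℝ)) (b := (16356407413/100000000000 : ℝ))
    (by norm_num) (by norm_num) (by nlinarith) (by nlinarith) (by norm_num) (by norm_num)
    (by norm_num)
  refine R_ge (c₁ := (151487757/1000000000 : ℝ)) (c₂ := (1.8378772 : ℝ)) (c₃ := (-34975987/62500000 : ℝ))
    (by norm_num) (by norm_num) hua hub ?_ log_two_pi_lt.le ?_ (by norm_num)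
  · have h := le_log_one_add (y := (32712814799/200000000000 : ℝ)) (by norm_num) (by norm_num)
    norm_num at h ⊢
    linarith
  · rw [show (16:ℝ)/(2*(16-2)) = (1 + 1/7)/2 by norm_num,
      Real.log_div (by norm_num) two_ne_zero]
    have h := le_log_one_add (y := (1/7 : ℝ)) (by norm_num) (by norm_num)
    have h2 := Real.log_two_lt_d9
    norm_num at h h2 ⊢
    linarith

lemma R_master {n : ℕ} (hn : 4 ≤ n) (hne : n ≠ 16) : R n ≤ 0.14216 := by
  by_cases h24 : 24 ≤ n
  · exact R_tail (by exact_mod_cast h24)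
  · push_neg at h24
    interval_cases n
    · simpa using Rn4
    · simpa using Rn5
    · simpa using Rn6
    · simpa using Rn7
    · simpa using Rn8
    · simpa using Rn9
    · simpa using Rn10
    · simpa using Rn11
    · simpa using Rn12
    · simpa using Rn13
    · simpa using Rn14
    · simpa using Rn15
    · exact absurd rfl hne
    · simpa using Rn17
    · simpa using Rn18
    · simpa using Rn19
    · simpa using Rn20
    · simpa using Rn21
    · simpa using Rn22
    · simpa using Rn23

end Qaux

/-- For integer `n ≥ 4`, the quantity
`Q(n) = T(n, j₀(n)) − (2/n)·log₂ √(2π) + (1/n)·log₂(n/(2(n−2)))`, where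
`j₀(n) = (−1+√(1+4en))/(2e)` and
`T(n,j) = log₂(n/(n−j)) + (j/n)·log₂((n−j)/j²)`, is at most `0.2052`, and
attains its maximum over the integers `n ≥ 4` at `n = 16`. -/
theorem Q_le_and_max_at_sixteen
    (j₀ : ℝ → ℝ) (hj₀ : ∀ n : ℝ, j₀ n = (-1 + Real.sqrt (1 + 4 * Real.exp 1 * n)) / (2 * Real.exp 1))
    (Q : ℝ → ℝ)
    (hQ : ∀ n : ℝ, Q n =
      (Real.logb 2 (n / (n - j₀ n)) + j₀ n / n * Real.logb 2 ((n - j₀ n) / (j₀ n) ^ 2))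
        - 2 / n * Real.logb 2 (Real.sqrt (2 * Real.pi))
        + 1 / n * Real.logb 2 (n / (2 * (n - 2)))) :
    (∀ n : ℕ, 4 ≤ n → Q n ≤ 0.2052) ∧ (∀ n : ℕ, 4 ≤ n → Q n ≤ Q 16) := by
  have hlog2 : (0.6931471803 : ℝ) < Real.log 2 := Real.log_two_gt_d9
  have hlogpos : (0:ℝ) < Real.log 2 := by linarith
  have hQR : ∀ x : ℝ, 4 ≤ x → Q x = Qaux.R x / Real.log 2 := by
    intro x hx
    have hj : j₀ x = Qaux.j x := hj₀ x
    rw [hQ, hj, Qaux.Q_eq hx]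
  have hR16u : Qaux.R 16 ≤ 0.1422333 := Qaux.Rn16
  have hR16l : (0.14216 : ℝ) ≤ Qaux.R 16 := Qaux.R16_ge
  have key : ∀ n : ℕ, 4 ≤ n → Qaux.R n ≤ 0.1422333 := by
    intro n hn
    by_cases h16 : n = 16
    · subst h16
      have : ((16:ℕ):ℝ) = (16:ℝ) := by norm_num
      rw [this]
      exact hR16u
    · have := Qaux.R_master hn h16
      linarith
  constructor
  · intro n hn
    have hx : (4:ℝ) ≤ (n:ℝ) := by exact_mod_cast hn
    rw [hQR n hx, div_le_iff₀ hlogpos]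
    have := key n hn
    nlinarith
  · intro n hn
    have hx : (4:ℝ) ≤ (n:ℝ) := by exact_mod_cast hn
    rw [hQR n hx, hQR 16 (by norm_num)]
    apply (div_le_div_iff_of_pos_right hlogpos).mpr
    by_cases h16 : n = 16
    · subst h16
      norm_num
    · have h1 : Qaux.R n ≤ 0.14216 := Qaux.R_master hn h16
      linarith
end

section
/- For a fixed real number n ≥ 4, the function j ↦ 2/(2n − 2j + 1/3) − 2/(2j + 1/(1−γ) − 2) is increasing on the interval 2 ≤ j ≤ n/2, its maximum value on this interval is M_s(n) = 2(7γ − 4)/((n − nγ − 1 + 2γ)(3n + 1)) (attained at j = n/2), and M_s(n) ≤ 2(7γ − 4)/(13(3 − 2γ)) for all n ≥ 4, where γ is the Euler–Mascheroni constant. -/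
open Real in
lemma four_sevenths_lt_eulerMascheroniConstant :
    (4 / 7 : ℝ) < eulerMascheroniConstant := by
  have h1 := eulerMascheroniSeq_lt_eulerMascheroniConstant 127
  have hq : (217 / 40 : ℚ) < harmonic 127 := by
    norm_num [harmonic, Finset.sum_range_succ]
  have hH := (Rat.cast_lt (K := ℝ)).mpr hq
  push_cast at hH
  rw [eulerMascheroniSeq] at h1
  norm_num at h1
  have hlog : Real.log 128 < 48521 / 10000 := by
    have h : (128 : ℝ) = 2 ^ 7 := by norm_num
    rw [h, Real.log_pow]
    have h2 := Real.log_two_lt_d9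
    norm_num at h2 ⊢
    nlinarith
  linarith

open Real in
/-- For fixed real `n ≥ 4`, the map
`j ↦ 2/(2n−2j+1/3) − 2/(2j+1/(1−γ)−2)` is increasing on `[2, n/2]`, its
maximum on this interval is `M_s(n) = 2(7γ−4)/((n−nγ−1+2γ)(3n+1))` (attained
at `j = n/2`), and `M_s(n) ≤ 2(7γ−4)/(13(3−2γ))`. -/
theorem upper_bound_monotone (n : ℝ) (hn : 4 ≤ n) :
    StrictMonoOn
        (fun j : ℝ =>
          2 / (2 * n - 2 * j + 1 / 3) - 2 / (2 * j + 1 / (1 - eulerMascheroniConstant) - 2))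
        (Set.Icc 2 (n / 2)) ∧
    (∀ j ∈ Set.Icc (2 : ℝ) (n / 2),
      2 / (2 * n - 2 * j + 1 / 3) - 2 / (2 * j + 1 / (1 - eulerMascheroniConstant) - 2)
        ≤ 2 * (7 * eulerMascheroniConstant - 4)
            / ((n - n * eulerMascheroniConstant - 1 + 2 * eulerMascheroniConstant)
                * (3 * n + 1))) ∧
    (2 / (2 * n - 2 * (n / 2) + 1 / 3)
          - 2 / (2 * (n / 2) + 1 / (1 - eulerMascheroniConstant) - 2)
        = 2 * (7 * eulerMascheroniConstant - 4)
            / ((n - n * eulerMascheroniConstant - 1 + 2 * eulerMascheroniConstant)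
                * (3 * n + 1))) ∧
    2 * (7 * eulerMascheroniConstant - 4)
          / ((n - n * eulerMascheroniConstant - 1 + 2 * eulerMascheroniConstant) * (3 * n + 1))
        ≤ 2 * (7 * eulerMascheroniConstant - 4) / (13 * (3 - 2 * eulerMascheroniConstant)) := by
  set γ := eulerMascheroniConstant with hγ
  have hγl : (4 / 7 : ℝ) < γ := four_sevenths_lt_eulerMascheroniConstant
  have hγu : γ < 2 / 3 := eulerMascheroniConstant_lt_two_thirds
  have h1γ : (0 : ℝ) < 1 - γ := by linarith
  have hinv : (0 : ℝ) < 1 / (1 - γ) := by positivity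
  -- positivity of denominators on the interval
  have hd1 : ∀ j ∈ Set.Icc (2 : ℝ) (n / 2), 0 < 2 * n - 2 * j + 1 / 3 := by
    intro j hj
    have := hj.2
    linarith
  have hd2 : ∀ j ∈ Set.Icc (2 : ℝ) (n / 2), 0 < 2 * j + 1 / (1 - γ) - 2 := by
    intro j hj
    have := hj.1
    linarith
  have hmono : StrictMonoOn
      (fun j : ℝ => 2 / (2 * n - 2 * j + 1 / 3) - 2 / (2 * j + 1 / (1 - γ) - 2))
      (Set.Icc 2 (n / 2)) := by
    intro x hx y hy hxy
    have h1x := hd1 x hx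
    have h1y := hd1 y hy
    have h2x := hd2 x hx
    have h2y := hd2 y hy
    have A : 2 / (2 * n - 2 * x + 1 / 3) < 2 / (2 * n - 2 * y + 1 / 3) :=
      div_lt_div_of_pos_left (by norm_num) h1y (by linarith)
    have B : 2 / (2 * y + 1 / (1 - γ) - 2) < 2 / (2 * x + 1 / (1 - γ) - 2) :=
      div_lt_div_of_pos_left (by norm_num) h2x (by linarith)
    simp only
    linarith
  have hA : (0 : ℝ) < n - n * γ - 1 + 2 * γ := by nlinarith
  have h3n : (0 : ℝ) < 3 * n + 1 := by linarith
  have heq : 2 / (2 * n - 2 * (n / 2) + 1 / 3) - 2 / (2 * (n / 2) + 1 / (1 - γ) - 2)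
      = 2 * (7 * γ - 4) / ((n - n * γ - 1 + 2 * γ) * (3 * n + 1)) := by
    have hd1' : (0 : ℝ) < 2 * n - 2 * (n / 2) + 1 / 3 := by linarith
    have hd2' : (0 : ℝ) < 2 * (n / 2) + 1 / (1 - γ) - 2 := by
      have : (2 : ℝ) ≤ n / 2 := by linarith
      linarith
    rw [div_sub_div _ _ hd1'.ne' hd2'.ne', div_eq_div_iff (by positivity) (by positivity)]
    field_simp
    ring
  have hhalf : (2 : ℝ) ≤ n / 2 := by linarith
  refine ⟨hmono, ?_, heq, ?_⟩
  · intro j hj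
    rw [← heq]
    exact hmono.monotoneOn hj (Set.mem_Icc.mpr ⟨hhalf, le_refl _⟩) hj.2
  · have hnum : (0 : ℝ) ≤ 2 * (7 * γ - 4) := by linarith
    have hden2 : (0 : ℝ) < 13 * (3 - 2 * γ) := by linarith
    have hle : 13 * (3 - 2 * γ) ≤ (n - n * γ - 1 + 2 * γ) * (3 * n + 1) := by nlinarith
    exact div_le_div_of_nonneg_left hnum hden2 hle
end
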